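/- arXiv:2508.13694 — 4 statements merged into one kernel-verified Lean document; each statement's English description precedes it below -/
import Mathlib

section
/- Let T > 0, let ℓ : (0,T) → ℝ be integrable and nonnegative, and let f ∈ L²(0,T) be nonnegative with f = 0 almost everywhere on (0,a), where 0 ≤ a < T. Then for every t ∈ [a,T], ∫ₐ^t ((ℓ ∗ f)(s))² ds ≤ (∫₀^{t−a} ℓ(σ) dσ)² · ∫ₐ^t f(s)² ds. -/
open MeasureTheory Set
open scoped ENNReal


-- substitution lemmas
lemma shift_left (Λ : ℝ → ℝ≥0∞) (hΛ : Measurable Λ) (c p q : ℝ) :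
    ∫⁻ r in Set.Ioo p q, Λ (c - r) = ∫⁻ u in Set.Ioo (c - q) (c - p), Λ u := by
  have h1 : ∀ r : ℝ, (Set.Ioo p q).indicator (fun r => Λ (c - r)) r
      = (Set.Ioo (c - q) (c - p)).indicator Λ (c - r) := by
    intro r
    simp [Set.indicator_apply, Set.mem_Ioo, sub_lt_sub_iff_left, and_comm]
  rw [← lintegral_indicator measurableSet_Ioo, lintegral_congr h1,
    (Measure.measurePreserving_sub_left volume c).lintegral_comp
      (hΛ.indicator measurableSet_Ioo),
    lintegral_indicator measurableSet_Ioo]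

lemma shift_right (Λ : ℝ → ℝ≥0∞) (hΛ : Measurable Λ) (c p q : ℝ) :
    ∫⁻ x in Set.Ioo p q, Λ (x - c) = ∫⁻ u in Set.Ioo (p - c) (q - c), Λ u := by
  have h1 : ∀ x : ℝ, (Set.Ioo p q).indicator (fun x => Λ (x - c)) x
      = (Set.Ioo (p - c) (q - c)).indicator Λ (x - c) := by
    intro x
    simp [Set.indicator_apply, Set.mem_Ioo, sub_lt_sub_iff_right]
  rw [← lintegral_indicator measurableSet_Ioo, lintegral_congr h1,
    (measurePreserving_sub_right volume c).lintegral_comp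
      (hΛ.indicator measurableSet_Ioo),
    lintegral_indicator measurableSet_Ioo]

-- weighted Cauchy–Schwarz for lintegrals
lemma weighted_cs {α : Type*} [MeasurableSpace α] (μ : Measure α) (w φ : α → ℝ≥0∞)
    (hw : Measurable w) (hφ : Measurable φ) :
    (∫⁻ x, w x * φ x ∂μ) ^ 2 ≤ (∫⁻ x, w x ∂μ) * ∫⁻ x, w x * φ x ^ 2 ∂μ := by
  have h2 : Real.HolderConjugate 2 2 := Real.HolderConjugate.two_two
  have key := ENNReal.lintegral_mul_le_Lp_mul_Lq μ h2
    (f := fun x => w x ^ (1/2 : ℝ)) (g := fun x => w x ^ (1/2 : ℝ) * φ x)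
    (hw.pow_const _).aemeasurable ((hw.pow_const _).mul hφ).aemeasurable
  have e1 : ∀ x : ℝ≥0∞, (x ^ (1/2 : ℝ)) ^ (2 : ℝ) = x := by
    intro x
    rw [← ENNReal.rpow_mul]
    norm_num
  have e2 : (fun x => ((fun x => w x ^ (1/2:ℝ)) * fun x => w x ^ (1/2:ℝ) * φ x) x)
      = fun x => w x * φ x := by
    funext x
    simp only [Pi.mul_apply]
    rw [← mul_assoc, ← ENNReal.rpow_add_of_nonneg (x := w x) _ _ (by norm_num) (by norm_num)]
    norm_num
  rw [e2] at key
  have e3 : (∫⁻ x, ((fun x => w x ^ (1/2:ℝ)) x) ^ (2:ℝ) ∂μ) = ∫⁻ x, w x ∂μ := by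
    apply lintegral_congr; intro x; exact e1 _
  have e4 : (∫⁻ x, ((fun x => w x ^ (1/2:ℝ) * φ x) x) ^ (2:ℝ) ∂μ)
      = ∫⁻ x, w x * φ x ^ 2 ∂μ := by
    apply lintegral_congr; intro x
    rw [ENNReal.mul_rpow_of_nonneg _ _ (by norm_num : (0:ℝ) ≤ 2), e1]
    congr 1
    rw [show (2:ℝ) = ((2:ℕ):ℝ) by norm_num, ENNReal.rpow_natCast]
  rw [e3, e4] at key
  calc (∫⁻ x, w x * φ x ∂μ) ^ 2
      ≤ ((∫⁻ x, w x ∂μ) ^ (1/(2:ℝ)) * (∫⁻ x, w x * φ x ^ 2 ∂μ) ^ (1/(2:ℝ))) ^ 2 := by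
        exact pow_le_pow_left' key 2
    _ = (∫⁻ x, w x ∂μ) * ∫⁻ x, w x * φ x ^ 2 ∂μ := by
        rw [mul_pow, ← ENNReal.rpow_natCast (_ ^ (1/(2:ℝ))), ← ENNReal.rpow_natCast (_ ^ (1/(2:ℝ))),
          ← ENNReal.rpow_mul, ← ENNReal.rpow_mul]
        norm_num

lemma swap_lemma (a t : ℝ) (K : ℝ → ℝ → ℝ≥0∞)
    (hK : Measurable fun p : ℝ × ℝ => K p.1 p.2) :
    ∫⁻ s in Set.Ioo a t, ∫⁻ r in Set.Ioo a s, K s r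
      = ∫⁻ r in Set.Ioo a t, ∫⁻ s in Set.Ioo r t, K s r := by
  set K' : ℝ → ℝ → ℝ≥0∞ := fun s r => if a < r ∧ r < s ∧ s < t then K s r else 0 with hK'
  have hsetm : MeasurableSet {p : ℝ × ℝ | a < p.2 ∧ p.2 < p.1 ∧ p.1 < t} := by
    apply MeasurableSet.inter
    · exact measurableSet_lt measurable_const measurable_snd
    · exact (measurableSet_lt measurable_snd measurable_fst).inter
        (measurableSet_lt measurable_fst measurable_const)
  have hK'm : Measurable (Function.uncurry K') := by
    have : Function.uncurry K' = fun p : ℝ × ℝ =>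
        if a < p.2 ∧ p.2 < p.1 ∧ p.1 < t then K p.1 p.2 else 0 := rfl
    rw [this]
    exact Measurable.ite hsetm hK measurable_const
  have lhs_eq : ∫⁻ s, ∫⁻ r, K' s r = ∫⁻ s in Set.Ioo a t, ∫⁻ r in Set.Ioo a s, K s r := by
    have h1 : ∀ s, (∫⁻ r, K' s r)
        = (Set.Ioo a t).indicator (fun s => ∫⁻ r in Set.Ioo a s, K s r) s := by
      intro s
      by_cases hs : s ∈ Set.Ioo a t
      · rw [Set.indicator_of_mem hs, ← lintegral_indicator measurableSet_Ioo]
        apply lintegral_congr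
        intro r
        simp only [hK', Set.indicator_apply, Set.mem_Ioo]
        by_cases h1 : a < r <;> by_cases h2 : r < s <;> simp [h1, h2, hs.2]
      · rw [Set.indicator_of_notMem hs]
        have : ∀ r, K' s r = 0 := by
          intro r
          rw [hK']
          simp only
          rw [if_neg]
          rintro ⟨h1, h2, h3⟩
          exact hs ⟨lt_trans h1 h2, h3⟩
        simp [this]
    rw [lintegral_congr h1, lintegral_indicator measurableSet_Ioo]
  have rhs_eq : ∫⁻ r, ∫⁻ s, K' s r = ∫⁻ r in Set.Ioo a t, ∫⁻ s in Set.Ioo r t, K s r := by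
    have h1 : ∀ r, (∫⁻ s, K' s r)
        = (Set.Ioo a t).indicator (fun r => ∫⁻ s in Set.Ioo r t, K s r) r := by
      intro r
      by_cases hr : r ∈ Set.Ioo a t
      · rw [Set.indicator_of_mem hr, ← lintegral_indicator measurableSet_Ioo]
        apply lintegral_congr
        intro s
        simp only [hK', Set.indicator_apply, Set.mem_Ioo]
        by_cases h1 : r < s <;> by_cases h2 : s < t <;> simp [h1, h2, hr.1]
      · rw [Set.indicator_of_notMem hr]
        have : ∀ s, K' s r = 0 := by
          intro s
          rw [hK']
          simp only
          rw [if_neg]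
          rintro ⟨h1, h2, h3⟩
          exact hr ⟨h1, lt_trans h2 h3⟩
        simp [this]
    rw [lintegral_congr h1, lintegral_indicator measurableSet_Ioo]
  rw [← lhs_eq, ← rhs_eq]
  exact lintegral_lintegral_swap hK'm.aemeasurable

lemma key_lemma (T a t : ℝ) (ha : 0 ≤ a) (hat : a ≤ t) (htT : t ≤ T)
    (ℓ f : ℝ → ℝ) (hℓm : Measurable ℓ) (hfm : Measurable f)
    (hℓ0 : ∀ u, 0 ≤ ℓ u) (hf0 : ∀ u, 0 ≤ f u)
    (hfz : ∀ r, r ∉ Set.Ioo a T → f r = 0)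
    (hℓfin : ∫⁻ u in Set.Ioo 0 T, ENNReal.ofReal (ℓ u) ≠ ⊤)
    (hffin : ∫⁻ r in Set.Ioo 0 T, ENNReal.ofReal (f r) ^ 2 ≠ ⊤) :
    (∫ s in a..t, (∫ r in (0 : ℝ)..s, ℓ (s - r) * f r) ^ 2)
      ≤ (∫ σ in (0 : ℝ)..(t - a), ℓ σ) ^ 2 * ∫ s in a..t, (f s) ^ 2 := by
  set Λ : ℝ → ℝ≥0∞ := fun u => ENNReal.ofReal (ℓ u) with hΛdef
  set F : ℝ → ℝ≥0∞ := fun r => ENNReal.ofReal (f r) with hFdef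
  have hΛm : Measurable Λ := ENNReal.measurable_ofReal.comp hℓm
  have hFm : Measurable F := ENNReal.measurable_ofReal.comp hfm
  set L : ℝ≥0∞ := ∫⁻ σ in Set.Ioo 0 (t - a), Λ σ with hLdef
  have hLfin : L ≠ ⊤ := by
    refine ne_top_of_le_ne_top hℓfin ?_
    exact lintegral_mono_set (Set.Ioo_subset_Ioo_right (by linarith))
  set B : ℝ≥0∞ := ∫⁻ r in Set.Ioo a t, F r ^ 2 with hBdef
  have hBfin : B ≠ ⊤ := by
    refine ne_top_of_le_ne_top hffin ?_
    exact lintegral_mono_set (Set.Ioo_subset_Ioo (by linarith) (by linarith))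
  set g : ℝ → ℝ := fun s => ∫ r in (0 : ℝ)..s, ℓ (s - r) * f r with hgdef
  -- (i) RHS ℓ factor
  have hi : (∫ σ in (0 : ℝ)..(t - a), ℓ σ) = L.toReal := by
    rw [intervalIntegral.integral_of_le (by linarith),
      ← Measure.restrict_congr_set Ioo_ae_eq_Ioc,
      integral_eq_lintegral_of_nonneg_ae (ae_of_all _ fun σ => hℓ0 σ)
        hℓm.aestronglyMeasurable]
  -- (ii) RHS f factor
  have hii : (∫ s in a..t, (f s) ^ 2) = B.toReal := by
    rw [intervalIntegral.integral_of_le hat,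
      ← Measure.restrict_congr_set Ioo_ae_eq_Ioc,
      integral_eq_lintegral_of_nonneg_ae (ae_of_all _ fun s => sq_nonneg (f s))
        ((hfm.pow_const 2).aestronglyMeasurable)]
    congr 1
    apply lintegral_congr
    intro s
    exact ENNReal.ofReal_pow (hf0 s) 2
  -- measurability of g on [0, ∞)
  have hgnonneg : ∀ s, 0 ≤ s → 0 ≤ g s := by
    intro s hs
    exact intervalIntegral.integral_nonneg hs
      (fun r _ => mul_nonneg (hℓ0 _) (hf0 _))
  set G2 : ℝ × ℝ → ℝ := fun p => if 0 < p.2 ∧ p.2 < p.1 then ℓ (p.1 - p.2) * f p.2 else 0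
    with hG2def
  have hG2m : Measurable G2 := by
    apply Measurable.ite
    · exact (measurableSet_lt measurable_const measurable_snd).inter
        (measurableSet_lt measurable_snd measurable_fst)
    · exact (hℓm.comp (measurable_fst.sub measurable_snd)).mul (hfm.comp measurable_snd)
    · exact measurable_const
  have hGs : ∀ s : ℝ, 0 ≤ s → g s = ∫ r, G2 (s, r) := by
    intro s hs
    have : (fun r => G2 (s, r)) = (Set.Ioo 0 s).indicator (fun r => ℓ (s - r) * f r) := by
      funext r
      simp only [hG2def, Set.indicator_apply, Set.mem_Ioo]
    rw [hgdef]
    simp only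
    rw [intervalIntegral.integral_of_le hs, integral_Ioc_eq_integral_Ioo, this,
      integral_indicator measurableSet_Ioo]
  have hgmeas : AEStronglyMeasurable (fun s => g s ^ 2) (volume.restrict (Set.Ioo a t)) := by
    have h1 : StronglyMeasurable fun s => ∫ r, G2 (s, r) :=
      hG2m.stronglyMeasurable.integral_prod_right'
    have h2 : AEStronglyMeasurable g (volume.restrict (Set.Ioo a t)) := by
      refine h1.aestronglyMeasurable.congr ?_
      exact (ae_restrict_mem measurableSet_Ioo).mono
        (fun s hs => (hGs s (le_trans ha hs.1.le)).symm)
    exact h2.pow 2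
  -- LHS as toReal of lintegral
  set A : ℝ≥0∞ := ∫⁻ s in Set.Ioo a t, ENNReal.ofReal (g s ^ 2) with hAdef
  have hiii : (∫ s in a..t, g s ^ 2) = A.toReal := by
    rw [intervalIntegral.integral_of_le hat,
      ← Measure.restrict_congr_set Ioo_ae_eq_Ioc,
      integral_eq_lintegral_of_nonneg_ae (ae_of_all _ fun s => sq_nonneg (g s)) hgmeas]
  -- pointwise bound
  have hpoint : ∀ s ∈ Set.Ioo a t,
      ENNReal.ofReal (g s ^ 2) ≤ L * ∫⁻ r in Set.Ioo a s, Λ (s - r) * F r ^ 2 := by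
    intro s hs
    obtain ⟨has, hst⟩ := hs
    have hs0 : (0 : ℝ) ≤ s := le_trans ha has.le
    have hsT : s ≤ T := le_trans hst.le htT
    -- step 1 : ofReal (g s) ≤ ∫⁻ r in Ioo a s, Λ (s-r) * F r
    have h1 : ENNReal.ofReal (g s) ≤ ∫⁻ r in Set.Ioo a s, Λ (s - r) * F r := by
      rw [hgdef]
      simp only
      rw [intervalIntegral.integral_of_le hs0]
      by_cases hint : IntegrableOn (fun r => ℓ (s - r) * f r) (Set.Ioc 0 s) volume
      · rw [ofReal_integral_eq_lintegral_ofReal hint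
          (ae_of_all _ fun r => mul_nonneg (hℓ0 _) (hf0 _))]
        have e1 : ∫⁻ r in Set.Ioc 0 s, ENNReal.ofReal (ℓ (s - r) * f r)
            = ∫⁻ r in Set.Ioc 0 s, Λ (s - r) * F r :=
          lintegral_congr fun r => ENNReal.ofReal_mul (hℓ0 _)
        rw [e1]
        apply le_of_eq
        -- restrict from Ioc 0 s to Ioo a s using vanishing of f
        have hind : ∀ r, Λ (s - r) * F r
            = (Set.Ioo a T).indicator (fun r => Λ (s - r) * F r) r := by
          intro r
          by_cases hr : r ∈ Set.Ioo a T
          · rw [Set.indicator_of_mem hr]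
          · rw [Set.indicator_of_notMem hr]
            have h0 : F r = 0 := by rw [hFdef]; simp only []; rw [hfz r hr]; simp
            rw [h0, mul_zero]
        calc ∫⁻ r in Set.Ioc 0 s, Λ (s - r) * F r
            = ∫⁻ r in Set.Ioc 0 s, (Set.Ioo a T).indicator (fun r => Λ (s - r) * F r) r :=
              lintegral_congr fun r => by rw [← hind]
          _ = ∫⁻ r in Set.Ioo a T ∩ Set.Ioc 0 s, Λ (s - r) * F r := by
              rw [lintegral_indicator measurableSet_Ioo, Measure.restrict_restrict
                measurableSet_Ioo]
          _ = ∫⁻ r in Set.Ioc a s, Λ (s - r) * F r := by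
              have hseteq : Set.Ioo a T ∩ Set.Ioc 0 s = Set.Ioc a s := by
                ext r
                simp only [Set.mem_inter_iff, Set.mem_Ioo, Set.mem_Ioc]
                constructor
                · rintro ⟨⟨h1, h2⟩, h3, h4⟩; exact ⟨h1, h4⟩
                · rintro ⟨h1, h2⟩
                  exact ⟨⟨h1, lt_of_le_of_lt h2 (lt_of_lt_of_le hst htT)⟩,
                    lt_of_le_of_lt ha h1, h2⟩
              rw [hseteq]
          _ = ∫⁻ r in Set.Ioo a s, Λ (s - r) * F r := by
              rw [← Measure.restrict_congr_set Ioo_ae_eq_Ioc]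
      · rw [integral_undef hint]
        simp
    -- step 2 : Cauchy–Schwarz
    have h2 : (∫⁻ r in Set.Ioo a s, Λ (s - r) * F r) ^ 2
        ≤ (∫⁻ r in Set.Ioo a s, Λ (s - r)) * ∫⁻ r in Set.Ioo a s, Λ (s - r) * F r ^ 2 :=
      weighted_cs _ (fun r => Λ (s - r)) F (hΛm.comp (measurable_const.sub measurable_id)) hFm
    -- step 3 : translation bound
    have h3 : (∫⁻ r in Set.Ioo a s, Λ (s - r)) ≤ L := by
      rw [shift_left Λ hΛm s a s]
      simp only [sub_self]
      exact lintegral_mono_set (Set.Ioo_subset_Ioo le_rfl (by linarith))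
    calc ENNReal.ofReal (g s ^ 2) = ENNReal.ofReal (g s) ^ 2 :=
          ENNReal.ofReal_pow (hgnonneg s hs0) 2
      _ ≤ (∫⁻ r in Set.Ioo a s, Λ (s - r) * F r) ^ 2 := pow_le_pow_left' h1 2
      _ ≤ (∫⁻ r in Set.Ioo a s, Λ (s - r)) * ∫⁻ r in Set.Ioo a s, Λ (s - r) * F r ^ 2 := h2
      _ ≤ L * ∫⁻ r in Set.Ioo a s, Λ (s - r) * F r ^ 2 :=
          mul_le_mul_left h3 _
  -- integrate the pointwise bound
  set S : ℝ≥0∞ := ∫⁻ s in Set.Ioo a t, ∫⁻ r in Set.Ioo a s, Λ (s - r) * F r ^ 2 with hSdef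
  have hA1 : A ≤ L * S := by
    have h := lintegral_mono_ae (μ := volume.restrict (Set.Ioo a t))
      (((ae_restrict_mem measurableSet_Ioo).mono (fun s hs => hpoint s hs)) :
        ∀ᵐ s ∂(volume.restrict (Set.Ioo a t)), ENNReal.ofReal (g s ^ 2)
          ≤ L * ∫⁻ r in Set.Ioo a s, Λ (s - r) * F r ^ 2)
    rwa [lintegral_const_mul' L _ hLfin] at h
  -- Fubini swap
  have hswap : S = ∫⁻ r in Set.Ioo a t, ∫⁻ s in Set.Ioo r t, Λ (s - r) * F r ^ 2 := by
    rw [hSdef]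
    exact swap_lemma a t (fun s r => Λ (s - r) * F r ^ 2)
      ((hΛm.comp (measurable_fst.sub measurable_snd)).mul
        ((hFm.comp measurable_snd).pow_const 2))
  -- bound the inner integral after swapping
  have hS2 : S ≤ L * B := by
    rw [hswap, hBdef, ← lintegral_const_mul' L _ hLfin]
    refine setLIntegral_mono_ae ((measurable_const.mul (hFm.pow_const 2)).aemeasurable) ?_
    refine ae_of_all _ fun r hr => ?_
    have e1 : ∫⁻ s in Set.Ioo r t, Λ (s - r) * F r ^ 2
        = (∫⁻ s in Set.Ioo r t, Λ (s - r)) * F r ^ 2 :=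
      lintegral_mul_const' _ _ (by simp [hFdef])
    rw [e1]
    have e2 : (∫⁻ s in Set.Ioo r t, Λ (s - r)) ≤ L := by
      rw [shift_right Λ hΛm r r t]
      simp only [sub_self]
      exact lintegral_mono_set (Set.Ioo_subset_Ioo le_rfl (by linarith [hr.1]))
    calc (∫⁻ s in Set.Ioo r t, Λ (s - r)) * F r ^ 2 ≤ L * F r ^ 2 :=
      mul_le_mul_left e2 _
      _ = L * F r ^ 2 := rfl
  -- combine
  have hchain : A ≤ L ^ 2 * B := by
    calc A ≤ L * S := hA1
      _ ≤ L * (L * B) := mul_le_mul_right hS2 _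
      _ = L ^ 2 * B := by ring
  rw [hi, hii, hiii]
  have hfin2 : L ^ 2 * B ≠ ⊤ := ENNReal.mul_ne_top (ENNReal.pow_ne_top hLfin) hBfin
  calc A.toReal ≤ (L ^ 2 * B).toReal := ENNReal.toReal_mono hfin2 hchain
    _ = L.toReal ^ 2 * B.toReal := by rw [ENNReal.toReal_mul, ENNReal.toReal_pow]

/-- Truncation estimate: if `f ∈ L²(0,T)` is nonnegative and vanishes a.e. on `(0,a)`,
then for every `t ∈ [a,T]`,
`∫ₐᵗ ((ℓ ∗ f)(s))² ds ≤ (∫₀^{t-a} ℓ)² ⬝ ∫ₐᵗ f²`. -/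
theorem stmt_1 (T a : ℝ) (hT : 0 < T) (ha : 0 ≤ a) (haT : a < T) (ℓ f : ℝ → ℝ)
    (hℓint : IntegrableOn ℓ (Set.Ioo 0 T))
    (hℓpos : ∀ t ∈ Set.Ioo (0 : ℝ) T, 0 ≤ ℓ t)
    (hf : MemLp f 2 (volume.restrict (Set.Ioo 0 T)))
    (hfpos : ∀ᵐ t ∂(volume.restrict (Set.Ioo (0 : ℝ) T)), 0 ≤ f t)
    (hfzero : ∀ᵐ t ∂(volume.restrict (Set.Ioo (0 : ℝ) a)), f t = 0) :
    ∀ t ∈ Set.Icc a T,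
      (∫ s in a..t, (∫ r in (0 : ℝ)..s, ℓ (s - r) * f r) ^ 2)
        ≤ (∫ σ in (0 : ℝ)..(t - a), ℓ σ) ^ 2 * ∫ s in a..t, (f s) ^ 2 := by
  intro t ht
  obtain ⟨hat, htT⟩ := ht
  have hℓsm := hℓint.1
  have hfsm := hf.1
  set ℓ' : ℝ → ℝ := fun u => max (hℓsm.mk ℓ u) 0 with hℓ'def
  set f' : ℝ → ℝ := fun r => if r ∈ Set.Ioo a T then max (hfsm.mk f r) 0 else 0 with hf'def
  have hℓ'm : Measurable ℓ' :=
    (hℓsm.stronglyMeasurable_mk.measurable).max measurable_const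
  have hf'm : Measurable f' :=
    Measurable.ite measurableSet_Ioo
      ((hfsm.stronglyMeasurable_mk.measurable).max measurable_const) measurable_const
  have hℓ'pos : ∀ u, 0 ≤ ℓ' u := fun u => le_max_right _ _
  have hf'pos : ∀ r, 0 ≤ f' r := by
    intro r
    rw [hf'def]
    by_cases h : r ∈ Set.Ioo a T
    · simp only [if_pos h]; exact le_max_right _ _
    · simp only [if_neg h]; exact le_rfl
  have hf'z : ∀ r, r ∉ Set.Ioo a T → f' r = 0 := fun r h => if_neg h
  -- a.e. equality of ℓ and ℓ' on (0,T)
  have hℓae : ∀ᵐ u ∂(volume : Measure ℝ), u ∈ Set.Ioo 0 T → ℓ u = ℓ' u := by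
    have h1 := (ae_restrict_iff' measurableSet_Ioo).1 hℓsm.ae_eq_mk
    filter_upwards [h1] with u hu hmem
    rw [hℓ'def]
    simp only
    rw [← hu hmem, max_eq_left (hℓpos u hmem)]
  -- a.e. equality of f and f' on (0,T)
  have hfae : ∀ᵐ r ∂(volume : Measure ℝ), r ∈ Set.Ioo 0 T → f r = f' r := by
    have h1 := (ae_restrict_iff' measurableSet_Ioo).1 hfsm.ae_eq_mk
    have h2 := (ae_restrict_iff' measurableSet_Ioo).1 hfpos
    have h3 := (ae_restrict_iff' measurableSet_Ioo).1 hfzero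
    have h4 : ∀ᵐ r ∂(volume : Measure ℝ), r ∉ ({a} : Set ℝ) :=
      measure_eq_zero_iff_ae_notMem.1 (measure_singleton a)
    filter_upwards [h1, h2, h3, h4] with r e1 e2 e3 e4 hmem
    rw [hf'def]
    by_cases hr : r ∈ Set.Ioo a T
    · simp only [if_pos hr]
      rw [← e1 hmem, max_eq_left (e2 hmem)]
    · simp only [if_neg hr]
      have hra : r ≤ a := by
        by_contra hcon
        exact hr ⟨lt_of_not_ge hcon, hmem.2⟩
      have hra' : r < a := lt_of_le_of_ne hra (fun h => e4 (by simp [h]))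
      exact e3 ⟨hmem.1, hra'⟩
  -- finiteness transfers
  have hℓ'fin : ∫⁻ u in Set.Ioo 0 T, ENNReal.ofReal (ℓ' u) ≠ ⊤ := by
    have heq : ∫⁻ u in Set.Ioo 0 T, ENNReal.ofReal (ℓ' u)
        = ∫⁻ u in Set.Ioo 0 T, ENNReal.ofReal (ℓ u) := by
      apply lintegral_congr_ae
      have := (ae_restrict_iff' measurableSet_Ioo).2 hℓae
      filter_upwards [this] with u hu
      rw [hu]
    rw [heq]
    exact ne_of_lt hℓint.lintegral_lt_top
  have hf'fin : ∫⁻ r in Set.Ioo 0 T, ENNReal.ofReal (f' r) ^ 2 ≠ ⊤ := by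
    have heq : ∫⁻ r in Set.Ioo 0 T, ENNReal.ofReal (f' r) ^ 2
        = ∫⁻ r in Set.Ioo 0 T, ENNReal.ofReal (f r) ^ 2 := by
      apply lintegral_congr_ae
      have := (ae_restrict_iff' measurableSet_Ioo).2 hfae
      filter_upwards [this] with r hr
      rw [hr]
    rw [heq]
    have hle : ∀ r : ℝ, ENNReal.ofReal (f r) ^ 2 ≤ ENNReal.ofReal (f r ^ 2) := by
      intro r
      rcases le_or_gt 0 (f r) with h | h
      · rw [ENNReal.ofReal_pow h]
      · rw [ENNReal.ofReal_of_nonpos h.le]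
        simp
    refine ne_of_lt (lt_of_le_of_lt (lintegral_mono hle) ?_)
    exact hf.integrable_sq.lintegral_lt_top
  -- rewrite goal in terms of ℓ', f'
  set Nset : Set ℝ := {u | ¬(u ∈ Set.Ioo 0 T → ℓ u = ℓ' u)} with hNdef
  have hNnull : volume Nset = 0 := ae_iff.1 hℓae
  have E1 : (∫ σ in (0:ℝ)..(t - a), ℓ σ) = ∫ σ in (0:ℝ)..(t - a), ℓ' σ := by
    apply intervalIntegral.integral_congr_ae
    have hTne : ∀ᵐ σ ∂(volume : Measure ℝ), σ ∉ ({T} : Set ℝ) :=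
      measure_eq_zero_iff_ae_notMem.1 (measure_singleton T)
    filter_upwards [hℓae, hTne] with σ h1 h2 hmem
    rw [Set.uIoc_of_le (by linarith : (0:ℝ) ≤ t - a)] at hmem
    have hσT : σ < T := lt_of_le_of_ne (by linarith [hmem.2]) (fun h => h2 (by simp [h]))
    exact h1 ⟨hmem.1, hσT⟩
  have E2 : (∫ s in a..t, (f s) ^ 2) = ∫ s in a..t, (f' s) ^ 2 := by
    apply intervalIntegral.integral_congr_ae
    have hTne : ∀ᵐ s ∂(volume : Measure ℝ), s ∉ ({T} : Set ℝ) :=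
      measure_eq_zero_iff_ae_notMem.1 (measure_singleton T)
    filter_upwards [hfae, hTne] with s h1 h2 hmem
    rw [Set.uIoc_of_le hat] at hmem
    have hsT : s < T := lt_of_le_of_ne (le_trans hmem.2 htT) (fun h => h2 (by simp [h]))
    rw [h1 ⟨lt_of_le_of_lt ha hmem.1, hsT⟩]
  have E3 : ∀ s ∈ Set.uIcc a t,
      (∫ r in (0:ℝ)..s, ℓ (s - r) * f r) = ∫ r in (0:ℝ)..s, ℓ' (s - r) * f' r := by
    intro s hs
    rw [Set.uIcc_of_le hat] at hs
    have hs0 : (0:ℝ) ≤ s := le_trans ha hs.1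
    apply intervalIntegral.integral_congr_ae
    have hpre : volume ((fun r => s - r) ⁻¹' Nset) = 0 :=
      (Measure.measurePreserving_sub_left volume s).quasiMeasurePreserving.preimage_null hNnull
    have hpre' : ∀ᵐ r ∂(volume : Measure ℝ), r ∉ (fun r => s - r) ⁻¹' Nset :=
      measure_eq_zero_iff_ae_notMem.1 hpre
    have hsne : ∀ᵐ r ∂(volume : Measure ℝ), r ∉ ({s} : Set ℝ) :=
      measure_eq_zero_iff_ae_notMem.1 (measure_singleton s)
    filter_upwards [hfae, hpre', hsne] with r h1 h2 h3 hmem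
    rw [Set.uIoc_of_le hs0] at hmem
    obtain ⟨hr0, hrs⟩ := hmem
    have hrs' : r < s := lt_of_le_of_ne hrs (fun h => h3 (by simp [h]))
    have hrT : r < T := lt_of_lt_of_le hrs' (hs.2.trans htT)
    have hfr : f r = f' r := h1 ⟨hr0, hrT⟩
    have hlr : ℓ (s - r) = ℓ' (s - r) := by
      have h2' : s - r ∈ Set.Ioo 0 T → ℓ (s - r) = ℓ' (s - r) := by
        have hh := h2
        simp only [Set.mem_preimage, hNdef, Set.mem_setOf_eq, not_not] at hh
        exact hh
      refine h2' ⟨by linarith, by linarith [hs.2]⟩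
    rw [hfr, hlr]
  rw [E1, E2, intervalIntegral.integral_congr (g := fun s => (∫ r in (0:ℝ)..s, ℓ' (s - r) * f' r) ^ 2)
    (fun s hs => by rw [E3 s hs])]
  exact key_lemma T a t ha hat htT ℓ' f' hℓ'm hf'm hℓ'pos hf'pos hf'z hℓ'fin hf'fin
end

section
/- Let E be a real Banach space, T > 0, ℓ : (0,T) → ℝ integrable, and g : (0,T) → E strongly measurable with ∫₀^T ‖g(s)‖² ds < ∞. Define z(t) := ∫₀^t ℓ(t − s) g(s) ds for t ∈ (0,T). Then for every h ∈ (0,T), ∫₀^{T−h} ‖z(t+h) − z(t)‖² dt ≤ 2 (∫₀^{T−h} |ℓ(σ+h) − ℓ(σ)| dσ)² ∫₀^T ‖g(s)‖² ds + 2 (∫₀^h |ℓ(σ)| dσ)² ∫₀^T ‖g(s)‖² ds. -/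
open MeasureTheory

open Set ENNReal NNReal

lemma aux_sq_add_le (a b : ℝ≥0∞) : (a + b) ^ 2 ≤ 2 * a ^ 2 + 2 * b ^ 2 := by
  rcases eq_or_ne a ∞ with ha | ha
  · have : (2:ℝ≥0∞) * a ^ 2 = ∞ := by simp [ha, pow_two]
    simp [this]
  rcases eq_or_ne b ∞ with hb | hb
  · have hbb : (2:ℝ≥0∞) * b ^ 2 = ∞ := by
      rw [hb]
      simp [pow_two]
    rw [hbb]
    simp
  lift a to ℝ≥0 using ha
  lift b to ℝ≥0 using hb
  have : ((a + b) ^ 2 : ℝ≥0) ≤ 2 * a ^ 2 + 2 * b ^ 2 := by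
    have := sq_nonneg ((a : ℝ) - b)
    rw [← NNReal.coe_le_coe]
    push_cast
    nlinarith
  calc ((a : ℝ≥0∞) + b) ^ 2 = ((((a + b) ^ 2 : ℝ≥0)) : ℝ≥0∞) := by push_cast; ring
    _ ≤ (((2 * a ^ 2 + 2 * b ^ 2 : ℝ≥0)) : ℝ≥0∞) := by exact_mod_cast ENNReal.coe_le_coe.2 this
    _ = 2 * (a : ℝ≥0∞) ^ 2 + 2 * (b : ℝ≥0∞) ^ 2 := by push_cast; ring

lemma aux_lint_sub_left (f : ℝ → ℝ≥0∞) (hf : Measurable f) (t : ℝ) :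
    ∫⁻ s, f (t - s) = ∫⁻ s, f s :=
  (Measure.measurePreserving_sub_left volume t).lintegral_comp hf

lemma aux_lint_add_right (f : ℝ → ℝ≥0∞) (hf : Measurable f) (h : ℝ) :
    ∫⁻ s, f (s + h) = ∫⁻ s, f s :=
  (measurePreserving_add_right volume h).lintegral_comp hf

lemma aux_young (κ γ : ℝ → ℝ≥0∞) (hκ : Measurable κ) (hγ : Measurable γ) :
    ∫⁻ t, (∫⁻ s, κ (t - s) * γ s) ^ 2 ≤ (∫⁻ σ, κ σ) ^ 2 * ∫⁻ s, (γ s) ^ 2 := by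
  set A := ∫⁻ σ, κ σ with hA
  have hprod : Measurable (fun p : ℝ × ℝ => κ (p.1 - p.2)) :=
    hκ.comp (measurable_fst.sub measurable_snd)
  have hJmeas : Measurable (fun t => ∫⁻ s, κ (t - s) * (γ s) ^ 2) :=
    Measurable.lintegral_prod_right' (hprod.mul ((hγ.comp measurable_snd).pow_const 2))
  have key : ∀ t, (∫⁻ s, κ (t - s) * γ s) ^ 2 ≤ A * ∫⁻ s, κ (t - s) * (γ s) ^ 2 := by
    intro t
    have hmeas1 : AEMeasurable (fun s => (κ (t - s)) ^ ((1:ℝ)/2)) volume :=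
      ((hκ.comp (measurable_const.sub measurable_id)).pow_const _).aemeasurable
    have hmeas2 : AEMeasurable (fun s => (κ (t - s)) ^ ((1:ℝ)/2) * γ s) volume :=
      hmeas1.mul hγ.aemeasurable
    have hHo := ENNReal.lintegral_mul_le_Lp_mul_Lq volume
      (Real.HolderConjugate.two_two : Real.HolderConjugate 2 2) hmeas1 hmeas2
    have heq : ∀ s, ((fun s => (κ (t - s)) ^ ((1:ℝ)/2)) * fun s => (κ (t - s)) ^ ((1:ℝ)/2) * γ s) s
        = κ (t - s) * γ s := by
      intro s
      simp only [Pi.mul_apply]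
      rw [← mul_assoc, ← ENNReal.rpow_add_of_nonneg _ _ (by norm_num) (by norm_num)]
      norm_num
    rw [lintegral_congr heq] at hHo
    have h1 : ∀ s, ((κ (t - s)) ^ ((1:ℝ)/2)) ^ (2:ℝ) = κ (t - s) := fun s => by
      rw [← ENNReal.rpow_mul]
      norm_num
    have h2 : ∀ s, ((κ (t - s)) ^ ((1:ℝ)/2) * γ s) ^ (2:ℝ) = κ (t - s) * (γ s) ^ 2 := fun s => by
      rw [ENNReal.mul_rpow_of_nonneg _ _ (by norm_num : (0:ℝ) ≤ 2), ← ENNReal.rpow_mul]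
      norm_num [ENNReal.rpow_two]
    simp only [h1, h2] at hHo
    rw [aux_lint_sub_left κ hκ t] at hHo
    calc (∫⁻ s, κ (t - s) * γ s) ^ 2
        ≤ (A ^ ((1:ℝ)/2) * (∫⁻ s, κ (t - s) * (γ s) ^ 2) ^ ((1:ℝ)/2)) ^ 2 := by
          exact pow_le_pow_left₀ zero_le hHo 2
      _ = A * ∫⁻ s, κ (t - s) * (γ s) ^ 2 := by
          rw [mul_pow, ← ENNReal.rpow_natCast (A ^ ((1:ℝ)/2)) 2, ← ENNReal.rpow_mul,
            ← ENNReal.rpow_natCast ((∫⁻ s, κ (t - s) * (γ s) ^ 2) ^ ((1:ℝ)/2)) 2,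
            ← ENNReal.rpow_mul]
          norm_num
  calc ∫⁻ t, (∫⁻ s, κ (t - s) * γ s) ^ 2
      ≤ ∫⁻ t, A * ∫⁻ s, κ (t - s) * (γ s) ^ 2 := lintegral_mono key
    _ = A * ∫⁻ t, ∫⁻ s, κ (t - s) * (γ s) ^ 2 := lintegral_const_mul A hJmeas
    _ = A * ∫⁻ s, ∫⁻ t, κ (t - s) * (γ s) ^ 2 := by
        rw [lintegral_lintegral_swap (hprod.mul ((hγ.comp measurable_snd).pow_const 2)).aemeasurable]
    _ = A * ∫⁻ s, (γ s) ^ 2 * A := by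
        congr 1
        refine lintegral_congr fun s => ?_
        have hf : Measurable fun t : ℝ => κ (t - s) := by fun_prop
        rw [lintegral_mul_const _ hf, mul_comm]
        congr 1
        exact (measurePreserving_sub_right volume s).lintegral_comp hκ
    _ = A ^ 2 * ∫⁻ s, (γ s) ^ 2 := by
        rw [lintegral_mul_const _ (hγ.pow_const 2), pow_two]; ring

lemma aux_ae_comp {p : ℝ → Prop} (hp : ∀ᵐ σ, p σ) {φ : ℝ → ℝ}
    (hφ : MeasurePreserving φ volume volume) : ∀ᵐ s, p (φ s) := by
  rw [ae_iff] at hp ⊢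
  exact hφ.quasiMeasurePreserving.preimage_null hp


/-- Time-increment estimate for the truncated convolution
`z(t) = ∫₀ᵗ ℓ(t-s) g(s) ds`:
`∫₀^{T-h} ‖z(t+h) - z(t)‖² dt ≤ 2 ‖ℓ(·+h) - ℓ‖²_{L¹(0,T-h)} ‖g‖²_{L²(0,T)}
  + 2 ‖ℓ‖²_{L¹(0,h)} ‖g‖²_{L²(0,T)}`. -/
theorem stmt_5 {E : Type*} [NormedAddCommGroup E] [NormedSpace ℝ E] [CompleteSpace E]
    (T : ℝ) (hT : 0 < T) (ℓ : ℝ → ℝ) (g : ℝ → E)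
    (hℓint : IntegrableOn ℓ (Set.Ioo 0 T))
    (hg : StronglyMeasurable g)
    (hgint : IntervalIntegrable (fun s => ‖g s‖ ^ 2) volume 0 T) :
    ∀ h ∈ Set.Ioo (0 : ℝ) T,
      (∫ t in (0 : ℝ)..(T - h),
          ‖(∫ s in (0 : ℝ)..(t + h), ℓ (t + h - s) • g s)
            - (∫ s in (0 : ℝ)..t, ℓ (t - s) • g s)‖ ^ 2)
        ≤ 2 * (∫ σ in (0 : ℝ)..(T - h), |ℓ (σ + h) - ℓ σ|) ^ 2
              * (∫ s in (0 : ℝ)..T, ‖g s‖ ^ 2)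
          + 2 * (∫ σ in (0 : ℝ)..h, |ℓ σ|) ^ 2
              * (∫ s in (0 : ℝ)..T, ‖g s‖ ^ 2) := by
  intro h hh
  obtain ⟨hh0, hhT⟩ := hh
  have hTh0 : 0 < T - h := by linarith
  have hℓm : AEStronglyMeasurable ℓ (volume.restrict (Set.Ioo 0 T)) := hℓint.aestronglyMeasurable
  set ℓ' : ℝ → ℝ := hℓm.mk ℓ with hℓ'def
  have hℓ'meas : Measurable ℓ' := hℓm.stronglyMeasurable_mk.measurable
  have hPae : ∀ᵐ σ, σ ∈ Set.Ioo (0:ℝ) T → ℓ σ = ℓ' σ :=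
    ae_imp_of_ae_restrict hℓm.ae_eq_mk
  set G : ℝ → E := (Set.Ioo 0 T).indicator g with hGdef
  set L : ℝ → ℝ := (Set.Ioo 0 T).indicator ℓ' with hLdef
  set k : ℝ → ℝ := (Set.Ioo 0 (T - h)).indicator (fun σ => ℓ' (σ + h) - ℓ' σ) with hkdef
  set m : ℝ → ℝ := (Set.Ioo 0 h).indicator ℓ' with hmdef
  have hGsm : StronglyMeasurable G := hg.indicator measurableSet_Ioo
  have hLmeas : Measurable L := hℓ'meas.indicator measurableSet_Ioo
  have hkmeas : Measurable k :=
    ((hℓ'meas.comp (measurable_id.add_const h)).sub hℓ'meas).indicator measurableSet_Ioo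
  have hmmeas : Measurable m := hℓ'meas.indicator measurableSet_Ioo
  set γ : ℝ → ℝ≥0∞ := fun s => (‖G s‖₊ : ℝ≥0∞) with hγdef
  have hγmeas : Measurable γ := hGsm.enorm
  set F : ℝ → ℝ → E := fun t s => (Set.Ioo 0 t).indicator (fun u => L (t - u) • G u) s with hFdef
  have hFprod : StronglyMeasurable (fun p : ℝ × ℝ => F p.1 p.2) := by
    have h1 : StronglyMeasurable (fun p : ℝ × ℝ => L (p.1 - p.2) • G p.2) :=
      ((hLmeas.comp (measurable_fst.sub measurable_snd)).stronglyMeasurable).smul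
        (hGsm.comp_measurable measurable_snd)
    have hset : MeasurableSet {p : ℝ × ℝ | p.2 ∈ Set.Ioo 0 p.1} :=
      (measurableSet_lt measurable_const measurable_snd).inter
        (measurableSet_lt measurable_snd measurable_fst)
    have heq : (fun p : ℝ × ℝ => F p.1 p.2)
        = {p : ℝ × ℝ | p.2 ∈ Set.Ioo 0 p.1}.indicator (fun p => L (p.1 - p.2) • G p.2) := by
      funext p
      by_cases hp : p.2 ∈ Set.Ioo 0 p.1
      · rw [Set.indicator_of_mem (show p ∈ {q : ℝ × ℝ | q.2 ∈ Set.Ioo 0 q.1} from hp)]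
        exact Set.indicator_of_mem hp _
      · rw [Set.indicator_of_notMem (show p ∉ {q : ℝ × ℝ | q.2 ∈ Set.Ioo 0 q.1} from hp)]
        exact Set.indicator_of_notMem hp _
    rw [heq]
    exact h1.indicator hset
  set ζ : ℝ → E := fun t => ∫ s, F t s with hζdef
  have hζsm : StronglyMeasurable ζ := hFprod.integral_prod_right'
  -- rewrite interval integrals through ζ
  have hz : ∀ t : ℝ, 0 < t → t ≤ T → (∫ s in (0:ℝ)..t, ℓ (t - s) • g s) = ζ t := by
    intro t ht0 htT
    rw [intervalIntegral.integral_of_le ht0.le, MeasureTheory.integral_Ioc_eq_integral_Ioo]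
    have hcongr : ∀ᵐ s ∂(volume.restrict (Set.Ioo 0 t)),
        ℓ (t - s) • g s = L (t - s) • G s := by
      have h1 : ∀ᵐ s : ℝ, (t - s) ∈ Set.Ioo (0:ℝ) T → ℓ (t - s) = ℓ' (t - s) :=
        aux_ae_comp hPae (Measure.measurePreserving_sub_left volume t)
      filter_upwards [ae_restrict_of_ae h1, ae_restrict_mem measurableSet_Ioo] with s h1s hs
      have hmem : t - s ∈ Set.Ioo (0:ℝ) T := ⟨by linarith [hs.2], by linarith [hs.1]⟩
      have hmem' : s ∈ Set.Ioo (0:ℝ) T := ⟨hs.1, lt_of_lt_of_le hs.2 htT⟩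
      rw [hLdef, hGdef, Set.indicator_of_mem hmem, Set.indicator_of_mem hmem', h1s hmem]
    rw [integral_congr_ae hcongr, ← MeasureTheory.integral_indicator measurableSet_Ioo]
  have hLHS : (∫ t in (0:ℝ)..(T - h),
        ‖(∫ s in (0:ℝ)..(t + h), ℓ (t + h - s) • g s) - ∫ s in (0:ℝ)..t, ℓ (t - s) • g s‖ ^ 2)
      = ∫ t in Set.Ioo 0 (T - h), ‖ζ (t + h) - ζ t‖ ^ 2 := by
    rw [intervalIntegral.integral_of_le hTh0.le, MeasureTheory.integral_Ioc_eq_integral_Ioo]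
    refine setIntegral_congr_fun measurableSet_Ioo (fun t ht => ?_)
    rw [hz (t + h) (by linarith [ht.1]) (by linarith [ht.2]), hz t ht.1 (by linarith [ht.2])]
  -- finiteness facts
  have hℓ'fin : (∫⁻ σ in Set.Ioo 0 T, (‖ℓ' σ‖₊ : ℝ≥0∞)) ≠ ∞ := by
    have hcongr : ∀ᵐ σ ∂(volume.restrict (Set.Ioo 0 T)), (‖ℓ' σ‖₊ : ℝ≥0∞) = (‖ℓ σ‖₊ : ℝ≥0∞) := by
      filter_upwards [hℓm.ae_eq_mk] with σ hσ
      rw [hℓ'def, ← hσ]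
    rw [lintegral_congr_ae hcongr]
    exact hℓint.2.ne
  have hL1 : (∫⁻ σ, (‖L σ‖₊ : ℝ≥0∞)) ≠ ∞ := by
    have heq : ∀ σ, ((‖L σ‖₊ : ℝ≥0∞)) = (Set.Ioo 0 T).indicator (fun σ => (‖ℓ' σ‖₊ : ℝ≥0∞)) σ := by
      intro σ
      by_cases hσ : σ ∈ Set.Ioo 0 T
      · rw [Set.indicator_of_mem hσ, hLdef, Set.indicator_of_mem hσ]
      · rw [Set.indicator_of_notMem hσ, hLdef, Set.indicator_of_notMem hσ]
        simp
    rw [lintegral_congr heq, lintegral_indicator measurableSet_Ioo]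
    exact hℓ'fin
  have hAmrepr : (∫⁻ σ, (‖m σ‖₊ : ℝ≥0∞)) = ∫⁻ σ in Set.Ioo 0 h, (‖ℓ' σ‖₊ : ℝ≥0∞) := by
    rw [← lintegral_indicator measurableSet_Ioo]
    refine lintegral_congr fun σ => ?_
    by_cases hσ : σ ∈ Set.Ioo 0 h
    · rw [Set.indicator_of_mem hσ, hmdef, Set.indicator_of_mem hσ]
    · rw [Set.indicator_of_notMem hσ, hmdef, Set.indicator_of_notMem hσ]
      simp
  have hAmfin : (∫⁻ σ, (‖m σ‖₊ : ℝ≥0∞)) ≠ ∞ := by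
    rw [hAmrepr]
    exact ne_top_of_le_ne_top hℓ'fin
      (lintegral_mono_set (Set.Ioo_subset_Ioo le_rfl hhT.le))
  have hAkrepr : (∫⁻ σ, (‖k σ‖₊ : ℝ≥0∞))
      = ∫⁻ σ in Set.Ioo 0 (T - h), (‖ℓ' (σ + h) - ℓ' σ‖₊ : ℝ≥0∞) := by
    rw [← lintegral_indicator measurableSet_Ioo]
    refine lintegral_congr fun σ => ?_
    by_cases hσ : σ ∈ Set.Ioo 0 (T - h)
    · rw [Set.indicator_of_mem hσ, hkdef, Set.indicator_of_mem hσ]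
    · rw [Set.indicator_of_notMem hσ, hkdef, Set.indicator_of_notMem hσ]
      simp
  have htransl : (∫⁻ σ in Set.Ioo 0 (T - h), (‖ℓ' (σ + h)‖₊ : ℝ≥0∞))
      = ∫⁻ σ in Set.Ioo h T, (‖ℓ' σ‖₊ : ℝ≥0∞) := by
    rw [← lintegral_indicator measurableSet_Ioo, ← lintegral_indicator measurableSet_Ioo,
      ← aux_lint_add_right ((Set.Ioo h T).indicator fun σ => (‖ℓ' σ‖₊ : ℝ≥0∞))
        (hℓ'meas.enorm.indicator measurableSet_Ioo) h]
    refine lintegral_congr fun σ => ?_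
    by_cases hσ : σ ∈ Set.Ioo 0 (T - h)
    · rw [Set.indicator_of_mem hσ,
        Set.indicator_of_mem (show σ + h ∈ Set.Ioo h T from ⟨by linarith [hσ.1], by linarith [hσ.2]⟩)]
    · rw [Set.indicator_of_notMem hσ,
        Set.indicator_of_notMem (show σ + h ∉ Set.Ioo h T from
          fun hc => hσ ⟨by linarith [hc.1], by linarith [hc.2]⟩)]
  have hAkfin : (∫⁻ σ, (‖k σ‖₊ : ℝ≥0∞)) ≠ ∞ := by
    rw [hAkrepr]
    have hb : (∫⁻ σ in Set.Ioo 0 (T - h), (‖ℓ' (σ + h) - ℓ' σ‖₊ : ℝ≥0∞))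
        ≤ (∫⁻ σ in Set.Ioo 0 (T - h), (‖ℓ' (σ + h)‖₊ : ℝ≥0∞))
          + ∫⁻ σ in Set.Ioo 0 (T - h), (‖ℓ' σ‖₊ : ℝ≥0∞) := by
      rw [← lintegral_add_left (show Measurable fun σ : ℝ => (‖ℓ' (σ + h)‖₊ : ℝ≥0∞) from
        (hℓ'meas.comp (measurable_id.add_const h)).enorm)]
      refine lintegral_mono fun σ => ?_
      rw [← ENNReal.coe_add]
      exact ENNReal.coe_le_coe.2 (nnnorm_sub_le _ _)
    refine ne_top_of_le_ne_top ?_ hb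
    refine ENNReal.add_ne_top.2 ⟨?_, ?_⟩
    · rw [htransl]
      exact ne_top_of_le_ne_top hℓ'fin
        (lintegral_mono_set (Set.Ioo_subset_Ioo hh0.le le_rfl))
    · exact ne_top_of_le_ne_top hℓ'fin
        (lintegral_mono_set (Set.Ioo_subset_Ioo le_rfl (by linarith)))
  have hΓrepr : (∫⁻ s, γ s ^ 2) = ∫⁻ s in Set.Ioo 0 T, ((‖g s‖₊ : ℝ≥0∞)) ^ 2 := by
    rw [← lintegral_indicator measurableSet_Ioo]
    refine lintegral_congr fun s => ?_
    by_cases hs : s ∈ Set.Ioo 0 T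
    · rw [Set.indicator_of_mem hs, hγdef]
      simp only [hGdef, Set.indicator_of_mem hs]
    · rw [Set.indicator_of_notMem hs, hγdef]
      simp only [hGdef, Set.indicator_of_notMem hs]
      simp
  have hΓfin : (∫⁻ s, γ s ^ 2) ≠ ∞ := by
    rw [hΓrepr]
    have h1 : (∫⁻ s in Set.Ioo 0 T, ((‖g s‖₊ : ℝ≥0∞)) ^ 2)
        = ∫⁻ s in Set.Ioc 0 T, ((‖g s‖₊ : ℝ≥0∞)) ^ 2 := by
      exact setLIntegral_congr MeasureTheory.Ioo_ae_eq_Ioc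
    rw [h1]
    have h2 : (∫⁻ s in Set.Ioc 0 T, ((‖g s‖₊ : ℝ≥0∞)) ^ 2)
        = ∫⁻ s in Set.Ioc 0 T, (‖(‖g s‖ ^ 2)‖₊ : ℝ≥0∞) := by
      refine lintegral_congr fun s => ?_
      simp [pow_two, nnnorm_mul, nnnorm_norm, ENNReal.coe_mul]
    rw [h2]
    exact hgint.1.2.ne
  -- a.e. finiteness of the dominating convolution
  have hΦprodmeas : Measurable (fun p : ℝ × ℝ => (‖L (p.1 - p.2)‖₊ : ℝ≥0∞) * γ p.2) :=
    ((hLmeas.comp (measurable_fst.sub measurable_snd)).enorm).mul (hγmeas.comp measurable_snd)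
  have hΦmeas : Measurable (fun t => ∫⁻ s, (‖L (t - s)‖₊ : ℝ≥0∞) * γ s) :=
    hΦprodmeas.lintegral_prod_right'
  have hγ1 : (∫⁻ s, γ s) ≠ ∞ := by
    have hb : ∀ s, γ s ≤ (Set.Ioo (0:ℝ) T).indicator (fun _ => (1:ℝ≥0∞)) s + γ s ^ 2 := by
      intro s
      by_cases hs : s ∈ Set.Ioo (0:ℝ) T
      · rw [Set.indicator_of_mem hs]
        rcases le_total (γ s) 1 with hγs | hγs
        · exact hγs.trans le_self_add
        · calc γ s = γ s * 1 := (mul_one _).symm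
            _ ≤ γ s * γ s := by gcongr
            _ = γ s ^ 2 := (pow_two _).symm
            _ ≤ _ := le_add_self
      · have : γ s = 0 := by
          rw [hγdef]
          simp only [hGdef, Set.indicator_of_notMem hs]
          simp
        rw [this]
        exact zero_le
    have : (∫⁻ s, γ s) ≤ volume (Set.Ioo (0:ℝ) T) + ∫⁻ s, γ s ^ 2 := by
      calc (∫⁻ s, γ s) ≤ ∫⁻ s, ((Set.Ioo (0:ℝ) T).indicator (fun _ => (1:ℝ≥0∞)) s + γ s ^ 2) :=
            lintegral_mono hb
        _ = (∫⁻ s, (Set.Ioo (0:ℝ) T).indicator (fun _ => (1:ℝ≥0∞)) s) + ∫⁻ s, γ s ^ 2 :=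
            lintegral_add_left (measurable_one.indicator measurableSet_Ioo) _
        _ = volume (Set.Ioo (0:ℝ) T) + ∫⁻ s, γ s ^ 2 := by
            rw [lintegral_indicator measurableSet_Ioo, setLIntegral_one]
    refine ne_top_of_le_ne_top ?_ this
    exact ENNReal.add_ne_top.2 ⟨(by simp : volume (Set.Ioo (0:ℝ) T) ≠ ∞), hΓfin⟩
  have hΦint : (∫⁻ t, ∫⁻ s, (‖L (t - s)‖₊ : ℝ≥0∞) * γ s) ≠ ∞ := by
    have hswap : (∫⁻ t, ∫⁻ s, (‖L (t - s)‖₊ : ℝ≥0∞) * γ s)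
        = ∫⁻ s, ∫⁻ t, (‖L (t - s)‖₊ : ℝ≥0∞) * γ s := lintegral_lintegral_swap hΦprodmeas.aemeasurable
    rw [hswap]
    have hinner : ∀ s : ℝ, (∫⁻ t, (‖L (t - s)‖₊ : ℝ≥0∞) * γ s)
        = (∫⁻ σ, (‖L σ‖₊ : ℝ≥0∞)) * γ s := by
      intro s
      rw [lintegral_mul_const _ (show Measurable fun t : ℝ => (‖L (t - s)‖₊ : ℝ≥0∞) from
        (hLmeas.comp (measurable_id.sub_const s)).enorm)]
      congr 1
      exact (measurePreserving_sub_right volume s).lintegral_comp hLmeas.enorm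
    rw [lintegral_congr hinner, lintegral_const_mul _ hγmeas]
    exact ENNReal.mul_ne_top hL1 hγ1
  have hΦae : ∀ᵐ t : ℝ, (∫⁻ s, (‖L (t - s)‖₊ : ℝ≥0∞) * γ s) < ∞ :=
    ae_lt_top hΦmeas hΦint
  have hΦae' : ∀ᵐ t : ℝ, (∫⁻ s, (‖L (t + h - s)‖₊ : ℝ≥0∞) * γ s) < ∞ :=
    aux_ae_comp hΦae (measurePreserving_add_right volume h)
  -- pointwise a.e. bound
  have hptwise : ∀ᵐ t : ℝ, t ∈ Set.Ioo 0 (T - h) →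
      (‖ζ (t + h) - ζ t‖₊ : ℝ≥0∞)
        ≤ (∫⁻ s, (‖k (t - s)‖₊ : ℝ≥0∞) * γ s) + ∫⁻ s, (‖m (t + h - s)‖₊ : ℝ≥0∞) * γ s := by
    filter_upwards [hΦae, hΦae'] with t hΦt hΦth ht
    obtain ⟨ht0, htTh⟩ := ht
    have hbound : ∀ τ s : ℝ, (‖F τ s‖₊ : ℝ≥0∞) ≤ (‖L (τ - s)‖₊ : ℝ≥0∞) * γ s := by
      intro τ s
      by_cases hs : s ∈ Set.Ioo (0:ℝ) τ
      · rw [hFdef]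
        simp only [Set.indicator_of_mem hs]
        rw [nnnorm_smul, ENNReal.coe_mul, hγdef]
      · rw [hFdef]
        simp only [Set.indicator_of_notMem hs]
        simp
    have hFsm : ∀ τ : ℝ, AEStronglyMeasurable (F τ) volume := by
      intro τ
      rw [hFdef]
      exact ((((hLmeas.comp (measurable_const.sub measurable_id)).stronglyMeasurable).smul
        hGsm).indicator measurableSet_Ioo).aestronglyMeasurable
    have hint : ∀ τ : ℝ, (∫⁻ s, (‖L (τ - s)‖₊ : ℝ≥0∞) * γ s) < ∞ → Integrable (F τ) := by
      intro τ hτ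
      refine ⟨hFsm τ, ?_⟩
      rw [MeasureTheory.hasFiniteIntegral_def]
      exact lt_of_le_of_lt (lintegral_mono (hbound τ)) hτ
    have hsub : ζ (t + h) - ζ t = ∫ s, (F (t + h) s - F t s) :=
      (integral_sub (hint _ hΦth) (hint _ hΦt)).symm
    rw [hsub]
    refine le_trans (enorm_integral_le_lintegral_enorm _) ?_
    have hae_s : ∀ᵐ s : ℝ, s ≠ t := by
      rw [ae_iff]
      simpa using measure_singleton t
    calc (∫⁻ s, (‖F (t + h) s - F t s‖₊ : ℝ≥0∞))
        ≤ ∫⁻ s, ((‖k (t - s)‖₊ : ℝ≥0∞) * γ s + (‖m (t + h - s)‖₊ : ℝ≥0∞) * γ s) := by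
          refine lintegral_mono_ae ?_
          filter_upwards [hae_s] with s hst
          by_cases h1 : s ∈ Set.Ioo (0:ℝ) t
          · have h1' : s ∈ Set.Ioo (0:ℝ) (t + h) := ⟨h1.1, by linarith [h1.2]⟩
            have e1 : F t s = L (t - s) • G s := by
              rw [hFdef]; exact Set.indicator_of_mem h1 _
            have e2 : F (t + h) s = L (t + h - s) • G s := by
              rw [hFdef]; exact Set.indicator_of_mem h1' _
            have hL2 : L (t + h - s) = ℓ' (t + h - s) := by
              rw [hLdef]
              exact Set.indicator_of_mem (show t + h - s ∈ Set.Ioo (0:ℝ) T from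
                ⟨by linarith [h1.2], by linarith [h1.1]⟩) _
            have hL1' : L (t - s) = ℓ' (t - s) := by
              rw [hLdef]
              exact Set.indicator_of_mem (show t - s ∈ Set.Ioo (0:ℝ) T from
                ⟨by linarith [h1.2], by linarith [h1.1]⟩) _
            have hk1 : k (t - s) = ℓ' (t - s + h) - ℓ' (t - s) := by
              rw [hkdef]
              exact Set.indicator_of_mem (show t - s ∈ Set.Ioo (0:ℝ) (T - h) from
                ⟨by linarith [h1.2], by linarith [h1.1]⟩) _
            have hdiff : F (t + h) s - F t s = k (t - s) • G s := by
              rw [e1, e2, hL2, hL1', ← sub_smul, hk1, show t - s + h = t + h - s by ring]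
            rw [hdiff, nnnorm_smul, ENNReal.coe_mul, hγdef]
            exact self_le_add_right _ _
          · by_cases h2 : s ∈ Set.Ioo (0:ℝ) (t + h)
            · have hts : t < s := by
                rcases lt_or_ge t s with hlt | hle
                · exact hlt
                · exact absurd ⟨h2.1, lt_of_le_of_ne hle hst⟩ h1
              have e1 : F t s = 0 := by
                rw [hFdef]; exact Set.indicator_of_notMem h1 _
              have e2 : F (t + h) s = L (t + h - s) • G s := by
                rw [hFdef]; exact Set.indicator_of_mem h2 _
              have hm1 : L (t + h - s) = m (t + h - s) := by
                rw [hLdef, hmdef,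
                  Set.indicator_of_mem (show t + h - s ∈ Set.Ioo (0:ℝ) T from
                    ⟨by linarith [h2.2], by linarith⟩),
                  Set.indicator_of_mem (show t + h - s ∈ Set.Ioo (0:ℝ) h from
                    ⟨by linarith [h2.2], by linarith⟩)]
              have hdiff : F (t + h) s - F t s = m (t + h - s) • G s := by
                rw [e1, e2, hm1, sub_zero]
              rw [hdiff, nnnorm_smul, ENNReal.coe_mul, hγdef]
              exact le_add_self
            · have e1 : F t s = 0 := by
                rw [hFdef]; exact Set.indicator_of_notMem h1 _
              have e2 : F (t + h) s = 0 := by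
                rw [hFdef]; exact Set.indicator_of_notMem h2 _
              rw [e1, e2, sub_zero]
              simp
      _ = (∫⁻ s, (‖k (t - s)‖₊ : ℝ≥0∞) * γ s) + ∫⁻ s, (‖m (t + h - s)‖₊ : ℝ≥0∞) * γ s :=
          lintegral_add_left (show Measurable fun s : ℝ => (‖k (t - s)‖₊ : ℝ≥0∞) * γ s from
            ((hkmeas.comp (measurable_const.sub measurable_id)).enorm).mul hγmeas) _
  -- main lintegral estimate
  have hIkmeas : Measurable (fun t => ∫⁻ s, (‖k (t - s)‖₊ : ℝ≥0∞) * γ s) :=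
    (((hkmeas.comp (measurable_fst.sub measurable_snd)).enorm).mul
      (hγmeas.comp measurable_snd)).lintegral_prod_right'
  have hImmeas : Measurable (fun t => ∫⁻ s, (‖m (t - s)‖₊ : ℝ≥0∞) * γ s) :=
    (((hmmeas.comp (measurable_fst.sub measurable_snd)).enorm).mul
      (hγmeas.comp measurable_snd)).lintegral_prod_right'
  have hyoungk := aux_young (fun σ => (‖k σ‖₊ : ℝ≥0∞)) γ hkmeas.enorm hγmeas
  have hyoungm := aux_young (fun σ => (‖m σ‖₊ : ℝ≥0∞)) γ hmmeas.enorm hγmeas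
  have key : (∫⁻ t in Set.Ioo 0 (T - h), (‖ζ (t + h) - ζ t‖₊ : ℝ≥0∞) ^ 2)
      ≤ 2 * (∫⁻ σ, (‖k σ‖₊ : ℝ≥0∞)) ^ 2 * (∫⁻ s, γ s ^ 2)
        + 2 * (∫⁻ σ, (‖m σ‖₊ : ℝ≥0∞)) ^ 2 * (∫⁻ s, γ s ^ 2) := by
    calc (∫⁻ t in Set.Ioo 0 (T - h), (‖ζ (t + h) - ζ t‖₊ : ℝ≥0∞) ^ 2)
        ≤ ∫⁻ t in Set.Ioo 0 (T - h),
            ((∫⁻ s, (‖k (t - s)‖₊ : ℝ≥0∞) * γ s) + ∫⁻ s, (‖m (t + h - s)‖₊ : ℝ≥0∞) * γ s) ^ 2 := by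
          refine lintegral_mono_ae ?_
          filter_upwards [ae_restrict_of_ae hptwise, ae_restrict_mem measurableSet_Ioo]
            with t hpt htmem
          exact pow_le_pow_left₀ zero_le (hpt htmem) 2
      _ ≤ ∫⁻ t in Set.Ioo 0 (T - h),
            (2 * (∫⁻ s, (‖k (t - s)‖₊ : ℝ≥0∞) * γ s) ^ 2
              + 2 * (∫⁻ s, (‖m (t + h - s)‖₊ : ℝ≥0∞) * γ s) ^ 2) :=
          lintegral_mono fun t => aux_sq_add_le _ _
      _ ≤ ∫⁻ t, (2 * (∫⁻ s, (‖k (t - s)‖₊ : ℝ≥0∞) * γ s) ^ 2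
              + 2 * (∫⁻ s, (‖m (t + h - s)‖₊ : ℝ≥0∞) * γ s) ^ 2) :=
          lintegral_mono' Measure.restrict_le_self le_rfl
      _ = 2 * (∫⁻ t, (∫⁻ s, (‖k (t - s)‖₊ : ℝ≥0∞) * γ s) ^ 2)
            + 2 * ∫⁻ t, (∫⁻ s, (‖m (t + h - s)‖₊ : ℝ≥0∞) * γ s) ^ 2 := by
          rw [lintegral_add_left (show Measurable fun t : ℝ =>
              2 * (∫⁻ s, (‖k (t - s)‖₊ : ℝ≥0∞) * γ s) ^ 2 from
              (hIkmeas.pow_const 2).const_mul 2),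
            lintegral_const_mul 2 (hIkmeas.pow_const 2),
            lintegral_const_mul 2 (show Measurable fun t : ℝ =>
              (∫⁻ s, (‖m (t + h - s)‖₊ : ℝ≥0∞) * γ s) ^ 2 from
              (hImmeas.comp (measurable_id.add_const h)).pow_const 2)]
      _ = 2 * (∫⁻ t, (∫⁻ s, (‖k (t - s)‖₊ : ℝ≥0∞) * γ s) ^ 2)
            + 2 * ∫⁻ t, (∫⁻ s, (‖m (t - s)‖₊ : ℝ≥0∞) * γ s) ^ 2 := by
          have haux := aux_lint_add_right (fun τ => (∫⁻ s, (‖m (τ - s)‖₊ : ℝ≥0∞) * γ s) ^ 2)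
            (hImmeas.pow_const 2) h
          rw [show (∫⁻ t, (∫⁻ s, (‖m (t + h - s)‖₊ : ℝ≥0∞) * γ s) ^ 2)
              = ∫⁻ t, (∫⁻ s, (‖m (t - s)‖₊ : ℝ≥0∞) * γ s) ^ 2 from haux]
      _ ≤ 2 * ((∫⁻ σ, (‖k σ‖₊ : ℝ≥0∞)) ^ 2 * ∫⁻ s, γ s ^ 2)
            + 2 * ((∫⁻ σ, (‖m σ‖₊ : ℝ≥0∞)) ^ 2 * ∫⁻ s, γ s ^ 2) := by
          exact add_le_add (mul_le_mul_right hyoungk 2) (mul_le_mul_right hyoungm 2)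
      _ = 2 * (∫⁻ σ, (‖k σ‖₊ : ℝ≥0∞)) ^ 2 * (∫⁻ s, γ s ^ 2)
            + 2 * (∫⁻ σ, (‖m σ‖₊ : ℝ≥0∞)) ^ 2 * (∫⁻ s, γ s ^ 2) := by
          ring
  -- conversions to real integrals
  have hIka : (∫ σ in (0:ℝ)..(T - h), |ℓ (σ + h) - ℓ σ|)
      = (∫⁻ σ, (‖k σ‖₊ : ℝ≥0∞)).toReal := by
    have hcongr : ∀ᵐ σ ∂(volume.restrict (Set.Ioo 0 (T - h))),
        |ℓ (σ + h) - ℓ σ| = |ℓ' (σ + h) - ℓ' σ| := by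
      filter_upwards [ae_restrict_of_ae hPae,
        ae_restrict_of_ae (aux_ae_comp hPae (measurePreserving_add_right volume h)),
        ae_restrict_mem measurableSet_Ioo] with σ h1 h2 hσ
      rw [h1 ⟨hσ.1, by linarith [hσ.2]⟩, h2 ⟨by linarith [hσ.1], by linarith [hσ.2]⟩]
    rw [intervalIntegral.integral_of_le hTh0.le, MeasureTheory.integral_Ioc_eq_integral_Ioo,
      integral_congr_ae hcongr,
      integral_eq_lintegral_of_nonneg_ae (ae_of_all _ fun σ => abs_nonneg _)
        (show AEStronglyMeasurable (fun σ => |ℓ' (σ + h) - ℓ' σ|)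
            (volume.restrict (Set.Ioo 0 (T - h))) from
          (((hℓ'meas.comp (measurable_id.add_const h)).sub hℓ'meas).abs.aestronglyMeasurable)),
      hAkrepr]
    congr 1
    exact lintegral_congr fun σ => (Real.enorm_eq_ofReal_abs _).symm
  have hIma : (∫ σ in (0:ℝ)..h, |ℓ σ|) = (∫⁻ σ, (‖m σ‖₊ : ℝ≥0∞)).toReal := by
    have hcongr : ∀ᵐ σ ∂(volume.restrict (Set.Ioo 0 h)), |ℓ σ| = |ℓ' σ| := by
      filter_upwards [ae_restrict_of_ae hPae, ae_restrict_mem measurableSet_Ioo] with σ h1 hσ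
      rw [h1 ⟨hσ.1, by linarith [hσ.2]⟩]
    rw [intervalIntegral.integral_of_le hh0.le, MeasureTheory.integral_Ioc_eq_integral_Ioo,
      integral_congr_ae hcongr,
      integral_eq_lintegral_of_nonneg_ae (ae_of_all _ fun σ => abs_nonneg _)
        (hℓ'meas.abs.aestronglyMeasurable),
      hAmrepr]
    congr 1
    exact lintegral_congr fun σ => (Real.enorm_eq_ofReal_abs _).symm
  have hIg : (∫ s in (0:ℝ)..T, ‖g s‖ ^ 2) = (∫⁻ s, γ s ^ 2).toReal := by
    rw [intervalIntegral.integral_of_le hT.le, MeasureTheory.integral_Ioc_eq_integral_Ioo,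
      integral_eq_lintegral_of_nonneg_ae (ae_of_all _ fun s => sq_nonneg _)
        ((hg.norm.measurable.pow_const 2).aestronglyMeasurable),
      hΓrepr]
    congr 1
    refine lintegral_congr fun s => ?_
    rw [ENNReal.ofReal_pow (norm_nonneg _), ofReal_norm, enorm_eq_nnnorm]
  have hLHS2 : (∫ t in Set.Ioo 0 (T - h), ‖ζ (t + h) - ζ t‖ ^ 2)
      = (∫⁻ t in Set.Ioo 0 (T - h), (‖ζ (t + h) - ζ t‖₊ : ℝ≥0∞) ^ 2).toReal := by
    rw [integral_eq_lintegral_of_nonneg_ae (ae_of_all _ fun t => sq_nonneg _)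
      (show AEStronglyMeasurable (fun t => ‖ζ (t + h) - ζ t‖ ^ 2)
          (volume.restrict (Set.Ioo 0 (T - h))) from
        (((hζsm.comp_measurable (measurable_id.add_const h)).sub
          hζsm).norm.measurable.pow_const 2).aestronglyMeasurable)]
    congr 1
    refine lintegral_congr fun t => ?_
    rw [ENNReal.ofReal_pow (norm_nonneg _), ofReal_norm, enorm_eq_nnnorm]
  have hfin2 : 2 * (∫⁻ σ, (‖k σ‖₊ : ℝ≥0∞)) ^ 2 * (∫⁻ s, γ s ^ 2)
      + 2 * (∫⁻ σ, (‖m σ‖₊ : ℝ≥0∞)) ^ 2 * (∫⁻ s, γ s ^ 2) ≠ ∞ := by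
    refine ENNReal.add_ne_top.2 ⟨?_, ?_⟩
    · exact ENNReal.mul_ne_top (ENNReal.mul_ne_top (by simp) (ENNReal.pow_ne_top hAkfin)) hΓfin
    · exact ENNReal.mul_ne_top (ENNReal.mul_ne_top (by simp) (ENNReal.pow_ne_top hAmfin)) hΓfin
  rw [hLHS, hLHS2, hIka, hIma, hIg]
  calc (∫⁻ t in Set.Ioo 0 (T - h), (‖ζ (t + h) - ζ t‖₊ : ℝ≥0∞) ^ 2).toReal
      ≤ (2 * (∫⁻ σ, (‖k σ‖₊ : ℝ≥0∞)) ^ 2 * (∫⁻ s, γ s ^ 2)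
          + 2 * (∫⁻ σ, (‖m σ‖₊ : ℝ≥0∞)) ^ 2 * (∫⁻ s, γ s ^ 2)).toReal :=
        ENNReal.toReal_mono hfin2 key
    _ = 2 * (∫⁻ σ, (‖k σ‖₊ : ℝ≥0∞)).toReal ^ 2 * (∫⁻ s, γ s ^ 2).toReal
          + 2 * (∫⁻ σ, (‖m σ‖₊ : ℝ≥0∞)).toReal ^ 2 * (∫⁻ s, γ s ^ 2).toReal := by
        rw [ENNReal.toReal_add
            (ENNReal.mul_ne_top (ENNReal.mul_ne_top (by simp) (ENNReal.pow_ne_top hAkfin)) hΓfin)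
            (ENNReal.mul_ne_top (ENNReal.mul_ne_top (by simp) (ENNReal.pow_ne_top hAmfin)) hΓfin),
          ENNReal.toReal_mul, ENNReal.toReal_mul, ENNReal.toReal_mul, ENNReal.toReal_mul,
          ENNReal.toReal_pow, ENNReal.toReal_pow, ENNReal.toReal_ofNat]
end

section
/- Let E be a real Banach space, T > 0, ℓ : (0,T) → ℝ integrable, and M ≥ 0. For g : (0,T) → E strongly measurable with ∫₀^T ‖g(s)‖² ds ≤ M², define z_g(t) := ∫₀^t ℓ(t − s) g(s) ds. Then for every η > 0 there exists h₀ ∈ (0,T) such that for all h ∈ (0,h₀) and all such g, ∫₀^{T−h} ‖z_g(t+h) − z_g(t)‖² dt ≤ η. In other words, lim_{h→0⁺} sup { ∫₀^{T−h} ‖z_g(t+h) − z_g(t)‖² dt : ‖g‖_{L²(0,T;E)} ≤ M } = 0. -/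
open MeasureTheory
open Set Filter
open scoped ENNReal Topology

private lemma sq_half_rpow (x : ℝ≥0∞) : x ^ (1/2:ℝ) * x ^ (1/2:ℝ) = x := by
  rw [← ENNReal.rpow_add_of_nonneg _ _ (by norm_num) (by norm_num)]
  norm_num

private lemma rpow_half_sq (x : ℝ≥0∞) : (x ^ (1/2:ℝ)) ^ (2:ℝ) = x := by
  rw [← ENNReal.rpow_mul]; norm_num

/-- Young-type inequality `‖m ⋆ B‖_{L²}² ≤ ‖m‖₁² ‖B‖₂²` in `ℝ≥0∞` form. -/
private lemma young_aux {A B : ℝ → ℝ≥0∞} (hA : Measurable A) (hB : Measurable B) :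
    ∫⁻ t, (∫⁻ s, A (t - s) * B s) ^ (2:ℝ) ≤
      (∫⁻ u, A u) ^ (2:ℝ) * ∫⁻ s, (B s) ^ (2:ℝ) := by
  set IA := ∫⁻ u, A u with hIA
  set W : ℝ → ℝ≥0∞ := fun t => ∫⁻ s, A (t - s) * B s ^ (2:ℝ) with hW
  have hAt : ∀ t : ℝ, Measurable fun s => A (t - s) := fun t =>
    hA.comp (measurable_const.sub measurable_id)
  have hsub : ∀ t : ℝ, ∫⁻ s, A (t - s) = IA := fun t =>
    (Measure.measurePreserving_sub_left volume t).lintegral_comp_emb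
      (MeasurableEquiv.subLeft t).measurableEmbedding A
  have hsubr : ∀ s : ℝ, ∫⁻ t, A (t - s) = IA := fun s =>
    (measurePreserving_sub_right volume s).lintegral_comp_emb
      (MeasurableEquiv.subRight s).measurableEmbedding A
  have hWmeas : Measurable W := by
    apply Measurable.lintegral_prod_right
    exact (hA.comp (measurable_fst.sub measurable_snd)).mul
      ((hB.comp measurable_snd).pow_const _)
  have inner : ∀ t : ℝ, (∫⁻ s, A (t - s) * B s) ≤ IA ^ (1/2:ℝ) * (W t) ^ (1/2:ℝ) := by
    intro t
    have hf : AEMeasurable (fun s => (A (t - s)) ^ (1/2:ℝ)) volume :=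
      ((hAt t).pow_const _).aemeasurable
    have hg : AEMeasurable (fun s => (A (t - s)) ^ (1/2:ℝ) * B s) volume :=
      (((hAt t).pow_const _).mul hB).aemeasurable
    have H := ENNReal.lintegral_mul_le_Lp_mul_Lq volume
      (p := 2) (q := 2) (by constructor <;> norm_num) hf hg
    calc (∫⁻ s, A (t - s) * B s)
        = ∫⁻ s, (A (t - s)) ^ (1/2:ℝ) * ((A (t - s)) ^ (1/2:ℝ) * B s) := by
          refine lintegral_congr fun s => ?_
          rw [← mul_assoc, sq_half_rpow]
      _ ≤ (∫⁻ s, ((A (t - s)) ^ (1/2:ℝ)) ^ (2:ℝ)) ^ (1/2:ℝ) *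
          (∫⁻ s, ((A (t - s)) ^ (1/2:ℝ) * B s) ^ (2:ℝ)) ^ (1/2:ℝ) := by
          simpa using H
      _ = IA ^ (1/2:ℝ) * (W t) ^ (1/2:ℝ) := by
          congr 1
          · congr 1
            rw [← hsub t]
            exact lintegral_congr fun s => rpow_half_sq _
          · congr 1
            refine lintegral_congr fun s => ?_
            rw [ENNReal.mul_rpow_of_nonneg _ _ (by norm_num), rpow_half_sq]
  calc ∫⁻ t, (∫⁻ s, A (t - s) * B s) ^ (2:ℝ)
      ≤ ∫⁻ t, IA * W t := by
        refine lintegral_mono fun t => ?_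
        calc (∫⁻ s, A (t - s) * B s) ^ (2:ℝ)
            ≤ (IA ^ (1/2:ℝ) * (W t) ^ (1/2:ℝ)) ^ (2:ℝ) :=
              ENNReal.rpow_le_rpow (inner t) (by norm_num)
          _ = IA * W t := by
              rw [ENNReal.mul_rpow_of_nonneg _ _ (by norm_num), rpow_half_sq, rpow_half_sq]
    _ = IA * ∫⁻ t, W t := lintegral_const_mul IA hWmeas
    _ = IA * (IA * ∫⁻ s, (B s) ^ (2:ℝ)) := by
        congr 1
        have hswap : ∫⁻ t, W t = ∫⁻ s, ∫⁻ t, A (t - s) * B s ^ (2:ℝ) := by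
          exact lintegral_lintegral_swap
            ((hA.comp (measurable_fst.sub measurable_snd)).mul
              ((hB.comp measurable_snd).pow_const _)).aemeasurable
        rw [hswap]
        have key : ∀ s : ℝ, ∫⁻ t, A (t - s) * B s ^ (2:ℝ) = IA * B s ^ (2:ℝ) := by
          intro s
          rw [lintegral_mul_const _ (show Measurable fun t : ℝ => A (t - s) from hA.comp (measurable_id.sub measurable_const)), hsubr s,
            mul_comm]
        rw [lintegral_congr key, lintegral_const_mul IA (hB.pow_const _)]
    _ = IA ^ (2:ℝ) * ∫⁻ s, (B s) ^ (2:ℝ) := by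
        rw [← mul_assoc]
        congr 1
        rw [show (2:ℝ) = ((2:ℕ):ℝ) by norm_num, ENNReal.rpow_natCast, sq]

private lemma tendsto_translate_cc {φ : ℝ → ℝ} (hφc : Continuous φ) (hφs : HasCompactSupport φ) :
    Tendsto (fun h : ℝ => ∫⁻ u, ‖φ (u + h) - φ u‖₊ ∂volume) (𝓝 0) (𝓝 0) := by
  obtain ⟨C, hC⟩ : ∃ C : ℝ, ∀ x, ‖φ x‖ ≤ C := hφs.exists_bound_of_continuous hφc
  have hC0 : 0 ≤ C := le_trans (norm_nonneg _) (hC 0)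
  set K : Set ℝ := Metric.cthickening 1 (tsupport φ) with hK
  have hKc : IsCompact K := (hφs : IsCompact (tsupport φ)).cthickening
  have h0 : Tendsto (fun h : ℝ => ∫⁻ u, ‖φ (u + h) - φ u‖₊ ∂volume) (𝓝 0)
      (𝓝 (∫⁻ _ : ℝ, (0:ℝ≥0∞) ∂volume)) := by
    apply tendsto_lintegral_filter_of_dominated_convergence
      (bound := K.indicator fun _ => ENNReal.ofReal (2 * C))
    · exact Eventually.of_forall fun h =>
        (((hφc.comp (continuous_id.add continuous_const)).sub hφc).nnnorm.measurable.coe_nnreal_ennreal)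
    · filter_upwards [Metric.ball_mem_nhds (0:ℝ) one_pos] with h hh
      refine Eventually.of_forall fun u => ?_
      by_cases hu : u ∈ K
      · rw [Set.indicator_of_mem hu]
        rw [← enorm_eq_nnnorm, ← ofReal_norm]
        refine ENNReal.ofReal_le_ofReal ?_
        calc ‖φ (u + h) - φ u‖ ≤ ‖φ (u + h)‖ + ‖φ u‖ := norm_sub_le _ _
          _ ≤ C + C := add_le_add (hC _) (hC _)
          _ = 2 * C := by ring
      · rw [Set.indicator_of_notMem hu]
        have hu1 : u ∉ tsupport φ := fun hmem => hu (Metric.self_subset_cthickening _ hmem)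
        have hu2 : u + h ∉ tsupport φ := by
          intro hmem
          apply hu
          apply Metric.mem_cthickening_of_dist_le u (u + h) 1 _ hmem
          rw [Real.dist_eq]
          simp only [Metric.mem_ball, Real.dist_eq, sub_zero] at hh
          rw [show u - (u + h) = -h by ring, abs_neg]
          exact hh.le
        rw [image_eq_zero_of_notMem_tsupport hu1, image_eq_zero_of_notMem_tsupport hu2]
        simp
    · rw [lintegral_indicator hKc.measurableSet, setLIntegral_const]
      exact ENNReal.mul_ne_top ENNReal.ofReal_ne_top hKc.measure_ne_top
    · refine Eventually.of_forall fun u => ?_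
      have : Tendsto (fun h : ℝ => φ (u + h) - φ u) (𝓝 0) (𝓝 (φ (u + 0) - φ u)) :=
        ((hφc.comp (continuous_const.add continuous_id)).sub continuous_const).tendsto 0
      rw [add_zero, sub_self] at this
      have := (ENNReal.continuous_coe.tendsto _).comp (this.nnnorm)
      simpa [Function.comp_def] using this
  simpa using h0

private lemma translate_small {f : ℝ → ℝ} (hfm : Measurable f) (hf : Integrable f volume)
    {ε : ℝ} (hε : 0 < ε) :
    ∃ δ > (0:ℝ), ∀ h : ℝ, |h| < δ →
      (∫⁻ u, ‖f (u + h) - f u‖₊ ∂volume) ≤ ENNReal.ofReal ε := by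
  have hε3 : (ENNReal.ofReal (ε/3)) ≠ 0 := by
    simp only [ne_eq, ENNReal.ofReal_eq_zero, not_le]
    positivity
  obtain ⟨φ, hφs, hφ, hφc, hφint⟩ := hf.exists_hasCompactSupport_lintegral_sub_le hε3
  have hev : ∀ᶠ h : ℝ in 𝓝 0,
      (∫⁻ u, ‖φ (u + h) - φ u‖₊ ∂volume) < ENNReal.ofReal (ε/3) :=
    (tendsto_translate_cc hφc hφs).eventually_lt_const
      (by simp only [ENNReal.ofReal_pos]; positivity)
  obtain ⟨δ, hδ, hδ'⟩ := Metric.eventually_nhds_iff.mp hev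
  refine ⟨δ, hδ, fun h hh => ?_⟩
  have h2 : (∫⁻ u, ‖φ (u + h) - φ u‖₊ ∂volume) ≤ ENNReal.ofReal (ε/3) :=
    (hδ' (by rwa [Real.dist_0_eq_abs])).le
  have meas1 : Measurable fun u => (‖f (u + h) - φ (u + h)‖₊ : ℝ≥0∞) :=
    (((hfm.comp (measurable_add_const h)).sub
      (hφc.measurable.comp (measurable_add_const h))).nnnorm).coe_nnreal_ennreal
  have meas2 : Measurable fun u => (‖φ (u + h) - φ u‖₊ : ℝ≥0∞) :=
    (((hφc.measurable.comp (measurable_add_const h)).sub hφc.measurable).nnnorm).coe_nnreal_ennreal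
  have h1 : (∫⁻ u, ‖f (u + h) - φ (u + h)‖₊ ∂volume) ≤ ENNReal.ofReal (ε/3) := by
    have : (∫⁻ u, ‖f (u + h) - φ (u + h)‖₊ ∂volume) = ∫⁻ u, ‖f u - φ u‖₊ ∂volume :=
      lintegral_add_right_eq_self (fun u => (‖f u - φ u‖₊ : ℝ≥0∞)) h
    rw [this]; exact hφ
  have h3 : (∫⁻ u, ‖φ u - f u‖₊ ∂volume) ≤ ENNReal.ofReal (ε/3) := by
    have : (∫⁻ u, ‖φ u - f u‖₊ ∂volume) = ∫⁻ u, ‖f u - φ u‖₊ ∂volume :=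
      lintegral_congr fun u => by rw [← neg_sub, nnnorm_neg]
    rw [this]; exact hφ
  calc (∫⁻ u, ‖f (u + h) - f u‖₊ ∂volume)
      ≤ ∫⁻ u, ((‖f (u + h) - φ (u + h)‖₊ : ℝ≥0∞) + ‖φ (u + h) - φ u‖₊ + ‖φ u - f u‖₊) := by
        refine lintegral_mono fun u => ?_
        have e : f (u+h) - f u = (f (u+h) - φ (u+h)) + (φ (u+h) - φ u) + (φ u - f u) := by ring
        rw [e]
        refine le_trans (ENNReal.coe_le_coe.2 ((nnnorm_add_le _ _).trans
          (add_le_add (nnnorm_add_le _ _) (le_refl _)))) ?_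
        rw [ENNReal.coe_add, ENNReal.coe_add]
    _ = (∫⁻ u, (‖f (u + h) - φ (u + h)‖₊ : ℝ≥0∞)) + (∫⁻ u, (‖φ (u + h) - φ u‖₊ : ℝ≥0∞))
        + ∫⁻ u, (‖φ u - f u‖₊ : ℝ≥0∞) := by
        rw [lintegral_add_left (by exact meas1.add meas2 : Measurable fun u => (‖f (u + h) - φ (u + h)‖₊ : ℝ≥0∞) + ‖φ (u + h) - φ u‖₊), lintegral_add_left meas1]
    _ ≤ ENNReal.ofReal (ε/3) + ENNReal.ofReal (ε/3) + ENNReal.ofReal (ε/3) :=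
        add_le_add (add_le_add h1 h2) h3
    _ = ENNReal.ofReal ε := by
        rw [← ENNReal.ofReal_add (by positivity) (by positivity),
          ← ENNReal.ofReal_add (by positivity) (by positivity)]
        ring_nf

/-- Uniform (in `g` bounded in `L²(0,T;E)`) smallness of time increments of the
truncated convolution `z_g(t) = ∫₀ᵗ ℓ(t-s) g(s) ds` as the increment `h → 0⁺`. -/
theorem stmt_6 {E : Type*} [NormedAddCommGroup E] [NormedSpace ℝ E] [CompleteSpace E]
    (T : ℝ) (hT : 0 < T) (ℓ : ℝ → ℝ) (M : ℝ) (hM : 0 ≤ M)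
    (hℓint : IntegrableOn ℓ (Set.Ioo 0 T)) :
    ∀ η > (0 : ℝ), ∃ h₀ ∈ Set.Ioo (0 : ℝ) T, ∀ h ∈ Set.Ioo (0 : ℝ) h₀,
      ∀ g : ℝ → E, StronglyMeasurable g →
        IntervalIntegrable (fun s => ‖g s‖ ^ 2) volume 0 T →
        (∫ s in (0 : ℝ)..T, ‖g s‖ ^ 2) ≤ M ^ 2 →
        (∫ t in (0 : ℝ)..(T - h),
            ‖(∫ s in (0 : ℝ)..(t + h), ℓ (t + h - s) • g s)
              - (∫ s in (0 : ℝ)..t, ℓ (t - s) • g s)‖ ^ 2) ≤ η := by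
  intro η hη
  -- a measurable truncation of ℓ
  set L : ℝ → ℝ := (Set.Ioo 0 T).indicator (hℓint.1.mk ℓ) with hLdef
  have hLmeas : Measurable L :=
    (hℓint.1.stronglyMeasurable_mk.measurable).indicator measurableSet_Ioo
  have hLae : L =ᵐ[volume] (Set.Ioo 0 T).indicator ℓ := by
    have h1 : ∀ᵐ x ∂volume, x ∈ Set.Ioo (0:ℝ) T → hℓint.1.mk ℓ x = ℓ x := by
      have h2 : ∀ᵐ x ∂(volume.restrict (Set.Ioo 0 T)), ℓ x = hℓint.1.mk ℓ x :=
        hℓint.1.ae_eq_mk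
      rw [ae_restrict_iff' measurableSet_Ioo] at h2
      filter_upwards [h2] with x hx h'x
      exact (hx h'x).symm
    filter_upwards [h1] with x hx
    by_cases h'x : x ∈ Set.Ioo (0:ℝ) T
    · rw [hLdef, Set.indicator_of_mem h'x, Set.indicator_of_mem h'x, hx h'x]
    · rw [hLdef, Set.indicator_of_notMem h'x, Set.indicator_of_notMem h'x]
  have hLint : Integrable L volume := by
    rw [hLdef, integrable_indicator_iff measurableSet_Ioo]
    exact hℓint.congr hℓint.1.ae_eq_mk
  -- choice of ε
  set ε : ℝ := Real.sqrt η / (M + 1) with hεdef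
  have hεpos : 0 < ε := div_pos (Real.sqrt_pos.2 hη) (by linarith)
  have hεM : ε ^ 2 * M ^ 2 ≤ η := by
    have h1 : ε ^ 2 = η / (M + 1) ^ 2 := by
      rw [hεdef, div_pow, Real.sq_sqrt hη.le]
    rw [h1, div_mul_eq_mul_div, div_le_iff₀ (by positivity)]
    nlinarith [sq_nonneg M]
  obtain ⟨δ, hδpos, hδ⟩ := translate_small hLmeas hLint hεpos
  refine ⟨min δ T / 2, ⟨by positivity, by
    have := min_le_right δ T; linarith⟩, ?_⟩
  rintro h ⟨hh0, hh1⟩ g hgm hg2 hgM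
  have hhδ : h < δ := by have := min_le_left δ T; linarith
  have hhT : h < T / 2 := by have := min_le_right δ T; linarith
  have hTh0 : 0 ≤ T - h := by linarith
  -- truncation of g
  set G : ℝ → E := (Set.Ioc 0 T).indicator g with hGdef
  have hGsm : StronglyMeasurable G := hgm.indicator measurableSet_Ioc
  have hgInt : IntegrableOn (fun s => ‖g s‖ ^ 2) (Set.Ioc 0 T) volume := hg2.1
  have hG2 : (∫⁻ s, (‖G s‖₊ : ℝ≥0∞) ^ (2:ℝ)) ≤ ENNReal.ofReal (M ^ 2) := by
    have e1 : (fun s => (‖G s‖₊ : ℝ≥0∞) ^ (2:ℝ)) =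
        (Set.Ioc 0 T).indicator (fun s => (‖g s‖₊ : ℝ≥0∞) ^ (2:ℝ)) := by
      funext s; by_cases hs : s ∈ Set.Ioc (0:ℝ) T
      · rw [Set.indicator_of_mem hs, hGdef, Set.indicator_of_mem hs]
      · rw [Set.indicator_of_notMem hs, hGdef, Set.indicator_of_notMem hs]
        simp only [nnnorm_zero, ENNReal.coe_zero]
        rw [ENNReal.zero_rpow_of_pos (by norm_num)]
    rw [e1, lintegral_indicator measurableSet_Ioc]
    have e2 : ∀ s : ℝ, (‖g s‖₊ : ℝ≥0∞) ^ (2:ℝ) = ENNReal.ofReal (‖g s‖ ^ 2) := by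
      intro s
      rw [ENNReal.ofReal_pow (norm_nonneg _), ← enorm_eq_nnnorm, ← ofReal_norm,
        show (2:ℝ) = ((2:ℕ):ℝ) by norm_num, ENNReal.rpow_natCast]
    rw [lintegral_congr e2,
      ← ofReal_integral_eq_lintegral_ofReal hgInt (ae_of_all _ fun s => sq_nonneg _)]
    apply ENNReal.ofReal_le_ofReal
    calc (∫ s in Set.Ioc 0 T, ‖g s‖ ^ 2)
        = ∫ s in (0:ℝ)..T, ‖g s‖ ^ 2 := (intervalIntegral.integral_of_le hT.le).symm
      _ ≤ M ^ 2 := hgM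
  have hGmem2 : MemLp G 2 volume := by
    refine ⟨hGsm.aestronglyMeasurable, ?_⟩
    rw [eLpNorm_eq_lintegral_rpow_enorm_toReal (by norm_num) (by norm_num)]
    rw [show ((2:ℝ≥0∞).toReal) = (2:ℝ) by norm_num]
    refine ENNReal.rpow_lt_top_of_nonneg (by norm_num) ?_
    exact ne_top_of_le_ne_top ENNReal.ofReal_ne_top hG2
  have hGint : Integrable G volume := by
    rw [← memLp_one_iff_integrable]
    refine hGmem2.mono_exponent_of_measure_support_ne_top
      (s := Set.Ioc 0 T) (fun x hx => Set.indicator_of_notMem hx g) ?_ one_le_two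
    rw [Real.volume_Ioc]; exact ENNReal.ofReal_ne_top
  -- product integrability
  have hΦsm : StronglyMeasurable (fun p : ℝ × ℝ => L (p.1 - p.2) • G p.2) :=
    ((hLmeas.comp (measurable_fst.sub measurable_snd)).stronglyMeasurable).smul
      (hGsm.comp_measurable measurable_snd)
  have hGnmeas : Measurable fun s => (‖G s‖₊ : ℝ≥0∞) :=
    hGsm.nnnorm.measurable.coe_nnreal_ennreal
  have hmeas2 : Measurable fun p : ℝ × ℝ => (‖L (p.1 - p.2)‖₊ : ℝ≥0∞) * ‖G p.2‖₊ :=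
    ((hLmeas.comp (measurable_fst.sub measurable_snd)).nnnorm.coe_nnreal_ennreal).mul
      (hGnmeas.comp measurable_snd)
  have hΦint : Integrable (fun p : ℝ × ℝ => L (p.1 - p.2) • G p.2) (volume.prod volume) := by
    refine ⟨hΦsm.aestronglyMeasurable, ?_⟩
    show (∫⁻ p : ℝ × ℝ, (‖L (p.1 - p.2) • G p.2‖₊ : ℝ≥0∞) ∂(volume.prod volume)) < ⊤
    calc (∫⁻ p : ℝ × ℝ, (‖L (p.1 - p.2) • G p.2‖₊ : ℝ≥0∞) ∂(volume.prod volume))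
        = ∫⁻ p : ℝ × ℝ, (‖L (p.1 - p.2)‖₊ : ℝ≥0∞) * ‖G p.2‖₊ ∂(volume.prod volume) := by
          refine lintegral_congr fun p => ?_
          rw [nnnorm_smul]; push_cast; ring
      _ = ∫⁻ t, ∫⁻ s, (‖L (t - s)‖₊ : ℝ≥0∞) * ‖G s‖₊ :=
          lintegral_prod _ hmeas2.aemeasurable
      _ = ∫⁻ s, ∫⁻ t, (‖L (t - s)‖₊ : ℝ≥0∞) * ‖G s‖₊ :=
          lintegral_lintegral_swap hmeas2.aemeasurable
      _ = ∫⁻ s, (∫⁻ u, (‖L u‖₊ : ℝ≥0∞)) * (‖G s‖₊ : ℝ≥0∞) := by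
          refine lintegral_congr fun s => ?_
          rw [lintegral_mul_const _ (show Measurable fun t : ℝ => (‖L (t - s)‖₊ : ℝ≥0∞) from
            (hLmeas.comp (measurable_id.sub measurable_const)).nnnorm.coe_nnreal_ennreal)]
          congr 1
          exact (measurePreserving_sub_right volume s).lintegral_comp_emb
            (MeasurableEquiv.subRight s).measurableEmbedding (fun u => (‖L u‖₊ : ℝ≥0∞))
      _ = (∫⁻ u, (‖L u‖₊ : ℝ≥0∞)) * ∫⁻ s, (‖G s‖₊ : ℝ≥0∞) :=
          lintegral_const_mul _ hGnmeas
      _ < ⊤ := ENNReal.mul_lt_top hLint.2 hGint.2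
  have hPae : ∀ᵐ t : ℝ ∂volume, Integrable (fun s => L (t - s) • G s) volume :=
    hΦint.prod_right_ae
  have hPaeh : ∀ᵐ t : ℝ ∂volume, Integrable (fun s => L (t + h - s) • G s) volume := by
    have h1 := (measurePreserving_add_right volume h).quasiMeasurePreserving.ae hPae
    exact h1
  -- interval integrals as full-line integrals
  have eq1 : ∀ τ : ℝ, 0 ≤ τ → τ ≤ T →
      (∫ s in (0:ℝ)..τ, ℓ (τ - s) • g s) = ∫ s, L (τ - s) • G s := by
    intro τ hτ0 hτT
    rw [intervalIntegral.integral_of_le hτ0, ← integral_indicator measurableSet_Ioc]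
    refine integral_congr_ae ?_
    have hcomp : (fun s => L (τ - s)) =ᵐ[volume]
        fun s => (Set.Ioo 0 T).indicator ℓ (τ - s) :=
      (Measure.measurePreserving_sub_left volume τ).quasiMeasurePreserving.ae_eq hLae
    filter_upwards [hcomp, compl_mem_ae_iff.mpr (measure_singleton τ)] with s hs hsτ
    simp only [Set.mem_compl_iff, Set.mem_singleton_iff] at hsτ
    by_cases hmem : s ∈ Set.Ioc 0 τ
    · rw [Set.indicator_of_mem hmem]
      have hsτ' : s < τ := lt_of_le_of_ne (Set.mem_Ioc.mp hmem).2 hsτ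
      have hmem' := Set.mem_Ioc.mp hmem
      have h1 : τ - s ∈ Set.Ioo (0:ℝ) T :=
        Set.mem_Ioo.mpr ⟨by linarith [hmem'.1], by linarith [hmem'.1]⟩
      rw [hs, Set.indicator_of_mem h1, hGdef,
        Set.indicator_of_mem (Set.mem_Ioc.mpr ⟨hmem'.1, hmem'.2.trans hτT⟩)]
    · rw [Set.indicator_of_notMem hmem]
      simp only [Set.mem_Ioc, not_and, not_le] at hmem
      by_cases hs0 : 0 < s
      · have hsτ' : τ < s := hmem hs0
        have h1 : τ - s ∉ Set.Ioo (0:ℝ) T := by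
          simp only [Set.mem_Ioo, not_and]; intro hc; linarith
        rw [hs, Set.indicator_of_notMem h1, zero_smul]
      · have h1 : s ∉ Set.Ioc (0:ℝ) T := by
          simp only [Set.mem_Ioc, not_and]; intro hc; exact absurd hc hs0
        rw [hGdef, Set.indicator_of_notMem h1, smul_zero]
  -- the increment kernel
  set m : ℝ → ℝ := fun u => L (u + h) - L u with hmdef
  have hmmeas : Measurable m := (hLmeas.comp (measurable_add_const h)).sub hLmeas
  have hIm : (∫⁻ u, (‖m u‖₊ : ℝ≥0∞)) ≤ ENNReal.ofReal ε :=
    hδ h (by rw [abs_of_pos hh0]; exact hhδ)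
  -- pointwise a.e. bound on the increment
  have hae_bound : ∀ᵐ t ∂(volume.restrict (Set.Ioc 0 (T - h))),
      ENNReal.ofReal (‖(∫ s in (0:ℝ)..(t + h), ℓ (t + h - s) • g s)
        - (∫ s in (0:ℝ)..t, ℓ (t - s) • g s)‖ ^ 2)
        ≤ (∫⁻ s, (‖m (t - s)‖₊ : ℝ≥0∞) * ‖G s‖₊) ^ (2:ℝ) := by
    filter_upwards [ae_restrict_of_ae hPae, ae_restrict_of_ae hPaeh,
      ae_restrict_mem measurableSet_Ioc] with t hPt hPth htmem
    obtain ⟨ht0, htTh⟩ := htmem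
    rw [eq1 (t + h) (by linarith) (by linarith), eq1 t ht0.le (by linarith),
      ← integral_sub hPth hPt]
    have e3 : (fun s => L (t + h - s) • G s - L (t - s) • G s)
        = fun s => m (t - s) • G s := by
      funext s
      rw [hmdef]
      simp only []
      rw [← sub_smul]
      congr 2
      ring
    rw [e3]
    have hb : (‖∫ s, m (t - s) • G s‖₊ : ℝ≥0∞) ≤ ∫⁻ s, (‖m (t - s)‖₊ : ℝ≥0∞) * ‖G s‖₊ := by
      refine le_trans (enorm_integral_le_lintegral_enorm _) (le_of_eq ?_)
      refine lintegral_congr fun s => ?_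
      rw [enorm_smul, enorm_eq_nnnorm, enorm_eq_nnnorm]
    calc ENNReal.ofReal (‖∫ s, m (t - s) • G s‖ ^ 2)
        = ((‖∫ s, m (t - s) • G s‖₊ : ℝ≥0∞)) ^ (2:ℝ) := by
          rw [ENNReal.ofReal_pow (norm_nonneg _), ← enorm_eq_nnnorm, ← ofReal_norm,
            show (2:ℝ) = ((2:ℕ):ℝ) by norm_num, ENNReal.rpow_natCast]
      _ ≤ _ := ENNReal.rpow_le_rpow hb (by norm_num)
  -- conclusion
  rw [intervalIntegral.integral_of_le hTh0]
  by_cases hint : IntegrableOn (fun t => ‖(∫ s in (0:ℝ)..(t + h), ℓ (t + h - s) • g s)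
      - (∫ s in (0:ℝ)..t, ℓ (t - s) • g s)‖ ^ 2) (Set.Ioc 0 (T - h)) volume
  · rw [integral_eq_lintegral_of_nonneg_ae (ae_of_all _ fun t => sq_nonneg _)
      hint.aestronglyMeasurable]
    refine ENNReal.toReal_le_of_le_ofReal hη.le ?_
    calc (∫⁻ t in Set.Ioc 0 (T - h), ENNReal.ofReal
          (‖(∫ s in (0:ℝ)..(t + h), ℓ (t + h - s) • g s)
            - (∫ s in (0:ℝ)..t, ℓ (t - s) • g s)‖ ^ 2))
        ≤ ∫⁻ t in Set.Ioc 0 (T - h), (∫⁻ s, (‖m (t - s)‖₊ : ℝ≥0∞) * ‖G s‖₊) ^ (2:ℝ) :=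
          lintegral_mono_ae hae_bound
      _ ≤ ∫⁻ t, (∫⁻ s, (‖m (t - s)‖₊ : ℝ≥0∞) * ‖G s‖₊) ^ (2:ℝ) :=
          setLIntegral_le_lintegral _ _
      _ ≤ (∫⁻ u, (‖m u‖₊ : ℝ≥0∞)) ^ (2:ℝ) * ∫⁻ s, (‖G s‖₊ : ℝ≥0∞) ^ (2:ℝ) :=
          young_aux (hmmeas.nnnorm.coe_nnreal_ennreal) hGnmeas
      _ ≤ (ENNReal.ofReal ε) ^ (2:ℝ) * ENNReal.ofReal (M ^ 2) :=
          mul_le_mul' (ENNReal.rpow_le_rpow hIm (by norm_num)) hG2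
      _ ≤ ENNReal.ofReal η := by
          rw [show (2:ℝ) = ((2:ℕ):ℝ) by norm_num, ENNReal.rpow_natCast,
            ← ENNReal.ofReal_pow hεpos.le, ← ENNReal.ofReal_mul (by positivity)]
          exact ENNReal.ofReal_le_ofReal hεM
  · rw [integral_undef hint]
    exact hη.le
end

section
/- Let H be a real Hilbert space, T > 0, ℓ : (0,T) → ℝ integrable and nonnegative, and let C_α > 0 and Λ_β, Λ_g ≥ 0. Let u, v, w, G ∈ L²(0,T;H) satisfy, for almost every t ∈ (0,T): (i) ⟨v(t), u(t)⟩ ≥ C_α ‖u(t)‖²; (ii) ‖w(t)‖ ≤ Λ_β ‖u(t)‖ and ‖G(t)‖ ≤ Λ_g ‖u(t)‖; and (iii) ∫₀^t ⟨v(s), u(s)⟩ ds ≤ −∫₀^t ⟨(ℓ ∗ w)(s), u(s)⟩ ds + ∫₀^t ⟨(ℓ ∗ G)(s), u(s)⟩ ds. Then u = 0 almost everywhere on (0,T). -/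
open MeasureTheory

open Set ENNReal

theorem ofReal_norm_eq_coe_nnnorm {E : Type*} [SeminormedAddCommGroup E] (a : E) :
    ENNReal.ofReal ‖a‖ = ((‖a‖₊ : NNReal) : ℝ≥0∞) := ofReal_norm a

theorem stmt10_refl (f : ℝ → ℝ≥0∞) (s : ℝ) : ∫⁻ x, f (s - x) = ∫⁻ x, f x := by
  calc ∫⁻ x, f (s - x) = ∫⁻ x, (fun y => f (-y)) (x - s) := by
        congr 1; ext x; simp [neg_sub]
    _ = ∫⁻ x, f (-x) := lintegral_sub_right_eq_self (fun y => f (-y)) s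
    _ = ∫⁻ x, f x := (Measure.measurePreserving_neg (volume : Measure ℝ)).lintegral_comp_emb
        (MeasurableEquiv.neg ℝ).measurableEmbedding f

theorem stmt10_two_mul (a b : ℝ≥0∞) : 2 * (a * b) ≤ a ^ 2 + b ^ 2 := by
  rcases eq_or_ne a ⊤ with ha | ha
  · rcases eq_or_ne b 0 with hb | hb
    · simp [hb]
    · have h2 : a ^ 2 = ⊤ := by simp [ha]
      simp [h2]
  rcases eq_or_ne b ⊤ with hb | hb
  · rcases eq_or_ne a 0 with ha0 | ha0
    · simp [ha0]
    · have h2 : b ^ 2 = ⊤ := by simp [hb]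
      simp [h2]
  lift a to NNReal using ha
  lift b to NNReal using hb
  rw [← ENNReal.coe_mul, ← ENNReal.coe_pow, ← ENNReal.coe_pow, ← ENNReal.coe_add,
    ← ENNReal.coe_ofNat, ← ENNReal.coe_mul, ENNReal.coe_le_coe, ← NNReal.coe_le_coe]
  push_cast
  nlinarith [sq_nonneg ((a:ℝ) - b)]

/-- The key kernel estimate by symmetrization. -/
theorem stmt10_kernel (L F : ℝ → ℝ≥0∞) (hL : Measurable L) (hF : Measurable F)
    (hFtop : ∀ x, F x ≠ ⊤) (a t δ : ℝ) (htδ : t ≤ a + δ)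
    (hΦ : (∫⁻ x, (Set.Ioo (0:ℝ) δ).indicator L x) ≠ ⊤) :
    (∫⁻ s in Set.Ioo a t, (∫⁻ r in Set.Ioo a s, L (s - r) * F r) * F s)
      ≤ (∫⁻ x, (Set.Ioo (0:ℝ) δ).indicator L x) * ∫⁻ x in Set.Ioo a t, F x ^ 2 := by
  set Lδ : ℝ → ℝ≥0∞ := (Set.Ioo (0:ℝ) δ).indicator L with hLδdef
  have hLδmeas : Measurable Lδ := hL.indicator measurableSet_Ioo
  set Φ : ℝ≥0∞ := ∫⁻ x, Lδ x with hΦdef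
  set Y : ℝ≥0∞ := ∫⁻ x in Set.Ioo a t, F x ^ 2 with hY
  -- step 1: replace inner integral
  have step1 : (∫⁻ s in Set.Ioo a t, (∫⁻ r in Set.Ioo a s, L (s - r) * F r) * F s)
      ≤ ∫⁻ s in Set.Ioo a t, (∫⁻ r in Set.Ioo a t, Lδ (s - r) * F r) * F s := by
    refine lintegral_mono_ae ?_
    filter_upwards [ae_restrict_mem measurableSet_Ioo] with s hs
    refine mul_le_mul_left ?_ _
    refine le_trans (le_of_eq ?_) (lintegral_mono_set (Set.Ioo_subset_Ioo_right hs.2.le))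
    refine lintegral_congr_ae ?_
    filter_upwards [ae_restrict_mem measurableSet_Ioo] with r hr
    have : s - r ∈ Set.Ioo (0:ℝ) δ := ⟨by linarith [hr.2], by linarith [hr.1, hs.2]⟩
    rw [hLδdef, Set.indicator_of_mem this]
  -- push F s inside
  have step2 : (∫⁻ s in Set.Ioo a t, (∫⁻ r in Set.Ioo a t, Lδ (s - r) * F r) * F s)
      = ∫⁻ s in Set.Ioo a t, ∫⁻ r in Set.Ioo a t, Lδ (s - r) * F r * F s := by
    refine lintegral_congr fun s => ?_
    rw [lintegral_mul_const' (F s) _ (hFtop s)]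
  -- symmetrization
  have hmeasA : Measurable (Function.uncurry fun s r => Lδ (s - r) * F r ^ 2) := by
    apply Measurable.mul
    · exact hLδmeas.comp (measurable_fst.sub measurable_snd)
    · exact (hF.pow_const 2).comp measurable_snd
  have hmeasB : Measurable fun p : ℝ × ℝ => Lδ (p.1 - p.2) := 
    hLδmeas.comp (measurable_fst.sub measurable_snd)
  have hItransl : ∀ r : ℝ, (∫⁻ s in Set.Ioo a t, Lδ (s - r)) ≤ Φ := by
    intro r
    refine le_trans (setLIntegral_le_lintegral _ _) (le_of_eq ?_)
    exact lintegral_sub_right_eq_self Lδ r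
  have hIrefl : ∀ s : ℝ, (∫⁻ r in Set.Ioo a t, Lδ (s - r)) ≤ Φ := by
    intro s
    refine le_trans (setLIntegral_le_lintegral _ _) (le_of_eq ?_)
    exact stmt10_refl Lδ s
  have key : 2 * (∫⁻ s in Set.Ioo a t, ∫⁻ r in Set.Ioo a t, Lδ (s - r) * F r * F s)
      ≤ 2 * (Φ * Y) := by
    rw [← lintegral_const_mul' 2 _ (by norm_num)]
    calc ∫⁻ s in Set.Ioo a t, 2 * ∫⁻ r in Set.Ioo a t, Lδ (s - r) * F r * F s
        = ∫⁻ s in Set.Ioo a t, ∫⁻ r in Set.Ioo a t, 2 * (Lδ (s - r) * F r * F s) := by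
          refine lintegral_congr fun s => ?_
          rw [lintegral_const_mul' 2 _ (by norm_num)]
      _ ≤ ∫⁻ s in Set.Ioo a t, ∫⁻ r in Set.Ioo a t,
            (Lδ (s - r) * F r ^ 2 + Lδ (s - r) * F s ^ 2) := by
          refine lintegral_mono fun s => lintegral_mono fun r => ?_
          calc 2 * (Lδ (s - r) * F r * F s) = Lδ (s - r) * (2 * (F r * F s)) := by ring
            _ ≤ Lδ (s - r) * (F r ^ 2 + F s ^ 2) :=
                mul_le_mul_right (stmt10_two_mul _ _) _
            _ = Lδ (s - r) * F r ^ 2 + Lδ (s - r) * F s ^ 2 := by ring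
      _ = (∫⁻ s in Set.Ioo a t, ∫⁻ r in Set.Ioo a t, Lδ (s - r) * F r ^ 2)
          + ∫⁻ s in Set.Ioo a t, ∫⁻ r in Set.Ioo a t, Lδ (s - r) * F s ^ 2 := by
          rw [← lintegral_add_left]
          · refine lintegral_congr fun s => ?_
            rw [← lintegral_add_left]
            exact (hLδmeas.comp (measurable_const.sub measurable_id)).mul (hF.pow_const 2)
          · exact hmeasA.lintegral_prod_right'
      _ ≤ Φ * Y + Φ * Y := by
          gcongr ?_ + ?_
          · -- swap
            rw [lintegral_lintegral_swap hmeasA.aemeasurable]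
            calc ∫⁻ r in Set.Ioo a t, ∫⁻ s in Set.Ioo a t, Lδ (s - r) * F r ^ 2
                = ∫⁻ r in Set.Ioo a t, (∫⁻ s in Set.Ioo a t, Lδ (s - r)) * F r ^ 2 := by
                  refine lintegral_congr fun r => ?_
                  rw [← lintegral_mul_const' (F r ^ 2) _ (ENNReal.pow_ne_top (hFtop r))]
              _ ≤ ∫⁻ r in Set.Ioo a t, Φ * F r ^ 2 :=
                  lintegral_mono fun r => mul_le_mul_left (hItransl r) _
              _ = Φ * Y := lintegral_const_mul' Φ _ hΦ
          · calc ∫⁻ s in Set.Ioo a t, ∫⁻ r in Set.Ioo a t, Lδ (s - r) * F s ^ 2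
                = ∫⁻ s in Set.Ioo a t, (∫⁻ r in Set.Ioo a t, Lδ (s - r)) * F s ^ 2 := by
                  refine lintegral_congr fun s => ?_
                  rw [← lintegral_mul_const' (F s ^ 2) _ (ENNReal.pow_ne_top (hFtop s))]
              _ ≤ ∫⁻ s in Set.Ioo a t, Φ * F s ^ 2 :=
                  lintegral_mono fun s => mul_le_mul_left (hIrefl s) _
              _ = Φ * Y := lintegral_const_mul' Φ _ hΦ
      _ = 2 * (Φ * Y) := (two_mul _).symm
  have := le_trans (le_trans (mul_le_mul_right step1 2) (le_of_eq (by rw [step2]))) key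
  exact (ENNReal.mul_le_mul_iff_right (by norm_num) (by norm_num)).mp this

theorem stmt10_conv_bound {H : Type*} [NormedAddCommGroup H] [InnerProductSpace ℝ H]
    (T : ℝ) (ℓ : ℝ → ℝ) (z u : ℝ → H) (Λz : ℝ) (hΛz : 0 ≤ Λz)
    (L F : ℝ → ℝ≥0∞)
    (hL' : ∀ᵐ x ∂(volume : Measure ℝ), x ∈ Set.Ioo (0:ℝ) T → (‖ℓ x‖₊ : ℝ≥0∞) = L x)
    (hF' : ∀ᵐ x ∂(volume : Measure ℝ), x ∈ Set.Ioo (0:ℝ) T → (‖u x‖₊ : ℝ≥0∞) = F x)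
    (hzb : ∀ᵐ x ∂(volume : Measure ℝ), x ∈ Set.Ioo (0:ℝ) T → ‖z x‖ ≤ Λz * ‖u x‖)
    (s : ℝ) (hs : s ∈ Set.Ioc (0:ℝ) T) :
    (‖∫ r in (0:ℝ)..s, ℓ (s - r) • z r‖₊ : ℝ≥0∞)
      ≤ ENNReal.ofReal Λz * ∫⁻ r in Set.Ioo (0:ℝ) s, L (s - r) * F r := by
  rw [intervalIntegral.integral_of_le hs.1.le]
  refine le_trans (enorm_integral_le_lintegral_enorm _) ?_
  rw [Measure.restrict_congr_set (Ioo_ae_eq_Ioc (μ := (volume : Measure ℝ)) (a := 0) (b := s)).symm]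
  have hmp : MeasurePreserving (fun r : ℝ => s - r) volume volume :=
    Measure.measurePreserving_sub_left volume s
  have hpull : ∀ᵐ r ∂(volume : Measure ℝ),
      (s - r) ∈ Set.Ioo (0:ℝ) T → (‖ℓ (s - r)‖₊ : ℝ≥0∞) = L (s - r) :=
    hmp.quasiMeasurePreserving.ae hL'
  have hb : ∀ᵐ r ∂(volume.restrict (Set.Ioo (0:ℝ) s)),
      (‖ℓ (s - r) • z r‖₊ : ℝ≥0∞) ≤ ENNReal.ofReal Λz * (L (s - r) * F r) := by
    filter_upwards [ae_restrict_mem measurableSet_Ioo, ae_restrict_of_ae hpull,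
      ae_restrict_of_ae hzb, ae_restrict_of_ae hF'] with r hr hp hz hf
    have hrT : r ∈ Set.Ioo (0:ℝ) T := ⟨hr.1, lt_of_lt_of_le hr.2 hs.2⟩
    have hsrT : s - r ∈ Set.Ioo (0:ℝ) T := ⟨by linarith [hr.2], by linarith [hr.1, hs.2]⟩
    calc (‖ℓ (s - r) • z r‖₊ : ℝ≥0∞) = (‖ℓ (s - r)‖₊ : ℝ≥0∞) * (‖z r‖₊ : ℝ≥0∞) := by
          rw [nnnorm_smul]; exact_mod_cast rfl
      _ ≤ L (s - r) * (ENNReal.ofReal Λz * F r) := by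
          refine mul_le_mul (le_of_eq (hp hsrT)) ?_ (zero_le) (zero_le)
          calc (‖z r‖₊ : ℝ≥0∞) = ENNReal.ofReal ‖z r‖ := (ofReal_norm_eq_coe_nnnorm _).symm
            _ ≤ ENNReal.ofReal (Λz * ‖u r‖) := ENNReal.ofReal_le_ofReal (hz hrT)
            _ = ENNReal.ofReal Λz * ENNReal.ofReal ‖u r‖ := ENNReal.ofReal_mul hΛz
            _ = ENNReal.ofReal Λz * F r := by
                rw [← hf hrT, ofReal_norm_eq_coe_nnnorm]
      _ = ENNReal.ofReal Λz * (L (s - r) * F r) := by ring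
  refine le_trans (lintegral_mono_ae hb) (le_of_eq ?_)
  exact lintegral_const_mul' _ _ ENNReal.ofReal_ne_top

/-- Abstract uniqueness argument: if `u, v, w, G ∈ L²(0,T;H)` satisfy, a.e. on `(0,T)`,
strong monotonicity `⟨v, u⟩ ≥ C_α ‖u‖²`, Lipschitz bounds `‖w‖ ≤ Λ_β ‖u‖`,
`‖G‖ ≤ Λ_g ‖u‖`, and the integral inequality
`∫₀ᵗ ⟨v, u⟩ ≤ -∫₀ᵗ ⟨ℓ ∗ w, u⟩ + ∫₀ᵗ ⟨ℓ ∗ G, u⟩`, then `u = 0` a.e. -/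
theorem stmt_10 {H : Type*} [NormedAddCommGroup H] [InnerProductSpace ℝ H]
    [CompleteSpace H] (T : ℝ) (hT : 0 < T) (ℓ : ℝ → ℝ)
    (hℓint : IntegrableOn ℓ (Set.Ioo 0 T))
    (hℓpos : ∀ t ∈ Set.Ioo (0 : ℝ) T, 0 ≤ ℓ t)
    (Cα Λβ Λg : ℝ) (hCα : 0 < Cα) (hΛβ : 0 ≤ Λβ) (hΛg : 0 ≤ Λg)
    (u v w G : ℝ → H)
    (hu : MemLp u 2 (volume.restrict (Set.Ioo 0 T)))
    (hv : MemLp v 2 (volume.restrict (Set.Ioo 0 T)))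
    (hw : MemLp w 2 (volume.restrict (Set.Ioo 0 T)))
    (hG : MemLp G 2 (volume.restrict (Set.Ioo 0 T)))
    (hmono : ∀ᵐ t ∂(volume.restrict (Set.Ioo (0 : ℝ) T)),
      Cα * ‖u t‖ ^ 2 ≤ inner ℝ (v t) (u t))
    (hwbound : ∀ᵐ t ∂(volume.restrict (Set.Ioo (0 : ℝ) T)), ‖w t‖ ≤ Λβ * ‖u t‖)
    (hGbound : ∀ᵐ t ∂(volume.restrict (Set.Ioo (0 : ℝ) T)), ‖G t‖ ≤ Λg * ‖u t‖)
    (hineq : ∀ᵐ t ∂(volume.restrict (Set.Ioo (0 : ℝ) T)),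
      (∫ s in (0 : ℝ)..t, (inner ℝ (v s) (u s) : ℝ))
        ≤ -(∫ s in (0 : ℝ)..t, (inner ℝ (∫ r in (0 : ℝ)..s, ℓ (s - r) • w r) (u s) : ℝ))
          + ∫ s in (0 : ℝ)..t, (inner ℝ (∫ r in (0 : ℝ)..s, ℓ (s - r) • G r) (u s) : ℝ)) :
    u =ᵐ[volume.restrict (Set.Ioo (0 : ℝ) T)] 0 := by
  classical
  have hum : AEMeasurable (fun x => ‖u x‖) (volume.restrict (Set.Ioo (0:ℝ) T)) :=
    hu.1.norm.aemeasurable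
  obtain ⟨f, hfmeas, hfae⟩ : ∃ f : ℝ → ℝ, Measurable f ∧
      (fun x => ‖u x‖) =ᵐ[volume.restrict (Set.Ioo (0:ℝ) T)] f :=
    ⟨hum.mk _, hum.measurable_mk, hum.ae_eq_mk⟩
  have hℓam : AEMeasurable ℓ (volume.restrict (Set.Ioo (0:ℝ) T)) := hℓint.aemeasurable
  obtain ⟨ℓm, hℓmmeas, hℓae⟩ : ∃ g : ℝ → ℝ, Measurable g ∧
      ℓ =ᵐ[volume.restrict (Set.Ioo (0:ℝ) T)] g :=
    ⟨hℓam.mk _, hℓam.measurable_mk, hℓam.ae_eq_mk⟩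
  set F : ℝ → ℝ≥0∞ := (Set.Ioo (0:ℝ) T).indicator (fun x => ENNReal.ofReal (f x)) with hFdef
  set L : ℝ → ℝ≥0∞ := (Set.Ioo (0:ℝ) T).indicator (fun x => ENNReal.ofReal (ℓm x)) with hLdef
  have hFmeas : Measurable F := (ENNReal.measurable_ofReal.comp hfmeas).indicator measurableSet_Ioo
  have hLmeas : Measurable L := (ENNReal.measurable_ofReal.comp hℓmmeas).indicator measurableSet_Ioo
  have hFtop : ∀ x, F x ≠ ⊤ := by
    intro x
    by_cases hx : x ∈ Set.Ioo (0:ℝ) T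
    · rw [hFdef, Set.indicator_of_mem hx]; exact ENNReal.ofReal_ne_top
    · rw [hFdef, Set.indicator_of_notMem hx]; exact ENNReal.zero_ne_top
  -- volume-a.e. implication forms
  have hfae' : ∀ᵐ x ∂(volume : Measure ℝ), x ∈ Set.Ioo (0:ℝ) T → ‖u x‖ = f x :=
    (ae_restrict_iff' measurableSet_Ioo).1 hfae
  have hℓae' : ∀ᵐ x ∂(volume : Measure ℝ), x ∈ Set.Ioo (0:ℝ) T → ℓ x = ℓm x :=
    (ae_restrict_iff' measurableSet_Ioo).1 hℓae
  have hwb' : ∀ᵐ x ∂(volume : Measure ℝ), x ∈ Set.Ioo (0:ℝ) T → ‖w x‖ ≤ Λβ * ‖u x‖ :=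
    (ae_restrict_iff' measurableSet_Ioo).1 hwbound
  have hGb' : ∀ᵐ x ∂(volume : Measure ℝ), x ∈ Set.Ioo (0:ℝ) T → ‖G x‖ ≤ Λg * ‖u x‖ :=
    (ae_restrict_iff' measurableSet_Ioo).1 hGbound
  have hmono' : ∀ᵐ x ∂(volume : Measure ℝ), x ∈ Set.Ioo (0:ℝ) T →
      Cα * ‖u x‖ ^ 2 ≤ inner ℝ (v x) (u x) :=
    (ae_restrict_iff' measurableSet_Ioo).1 hmono
  have hF' : ∀ᵐ x ∂(volume : Measure ℝ), x ∈ Set.Ioo (0:ℝ) T → (‖u x‖₊ : ℝ≥0∞) = F x := by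
    filter_upwards [hfae'] with x hx hmem
    rw [hFdef, Set.indicator_of_mem hmem, ← hx hmem, ofReal_norm_eq_coe_nnnorm]
  have hL' : ∀ᵐ x ∂(volume : Measure ℝ), x ∈ Set.Ioo (0:ℝ) T → (‖ℓ x‖₊ : ℝ≥0∞) = L x := by
    filter_upwards [hℓae'] with x hx hmem
    rw [hLdef, Set.indicator_of_mem hmem, ← hx hmem, ← ofReal_norm_eq_coe_nnnorm,
      Real.norm_eq_abs, abs_of_nonneg (hℓpos x hmem)]
  -- finiteness of total masses
  have hℓnn : 0 ≤ᵐ[volume.restrict (Set.Ioo (0:ℝ) T)] ℓ :=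
    (ae_restrict_iff' measurableSet_Ioo).2 (Filter.Eventually.of_forall hℓpos)
  have hLtot : (∫⁻ x, L x ∂(volume : Measure ℝ)) ≠ ⊤ := by
    rw [hLdef, lintegral_indicator measurableSet_Ioo]
    have h1 : (∫⁻ x in Set.Ioo (0:ℝ) T, ENNReal.ofReal (ℓm x) ∂volume)
        = ∫⁻ x in Set.Ioo (0:ℝ) T, ENNReal.ofReal (ℓ x) ∂volume := by
      refine lintegral_congr_ae ?_
      filter_upwards [hℓae] with x hx
      rw [hx]
    rw [h1, ← ofReal_integral_eq_lintegral_ofReal hℓint hℓnn]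
    exact ENNReal.ofReal_ne_top
  have hu2 : Integrable (fun x => ‖u x‖ ^ 2) (volume.restrict (Set.Ioo (0:ℝ) T)) := by
    have h := hu.norm_rpow (by norm_num) (by norm_num)
    rw [memLp_one_iff_integrable] at h
    refine h.congr (Filter.Eventually.of_forall fun x => ?_)
    show ‖u x‖ ^ ((2 : ℝ≥0∞).toReal) = ‖u x‖ ^ 2
    have h2 : ((2 : ℝ≥0∞).toReal) = ((2 : ℕ) : ℝ) := by norm_num
    rw [h2, Real.rpow_natCast]
  have hF2vol : (∫⁻ x, F x ^ 2 ∂(volume : Measure ℝ)) ≠ ⊤ := by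
    have h1 : (fun x => F x ^ 2)
        = (Set.Ioo (0:ℝ) T).indicator (fun x => ENNReal.ofReal (f x) ^ 2) := by
      funext x
      by_cases hx : x ∈ Set.Ioo (0:ℝ) T
      · rw [hFdef]; simp [Set.indicator_of_mem hx]
      · rw [hFdef]; simp [Set.indicator_of_notMem hx]
    rw [h1, lintegral_indicator measurableSet_Ioo]
    have h2 : (∫⁻ x in Set.Ioo (0:ℝ) T, ENNReal.ofReal (f x) ^ 2 ∂volume)
        = ∫⁻ x in Set.Ioo (0:ℝ) T, ENNReal.ofReal (‖u x‖ ^ 2) ∂volume := by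
      refine lintegral_congr_ae ?_
      filter_upwards [hfae] with x hx
      rw [← hx, ← ENNReal.ofReal_pow (norm_nonneg _)]
    rw [h2, ← ofReal_integral_eq_lintegral_ofReal hu2
      (Filter.Eventually.of_forall fun x => sq_nonneg _)]
    exact ENNReal.ofReal_ne_top
  -- integrability of the inner product pairing
  have hvu : Integrable (fun x => (inner ℝ (v x) (u x) : ℝ))
      (volume.restrict (Set.Ioo (0:ℝ) T)) := by
    have h2 := MeasureTheory.L2.integrable_inner (𝕜 := ℝ) (hv.toLp v) (hu.toLp u)
    refine h2.congr ?_
    filter_upwards [hv.coeFn_toLp, hu.coeFn_toLp] with x hx hy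
    rw [hx, hy]
  -- the convolution kernels
  set J : ℝ → ℝ≥0∞ := fun s => ∫⁻ r in Set.Ioo (0:ℝ) s, L (s - r) * F r ∂volume with hJdef
  set D : ℝ → ℝ≥0∞ := fun t => ∫⁻ s in Set.Ioo (0:ℝ) t, J s * F s ∂volume with hDdef
  set Φ : ℝ → ℝ≥0∞ := fun d => ∫⁻ x, (Set.Ioo (0:ℝ) d).indicator L x ∂(volume : Measure ℝ)
    with hΦdef
  have hΦfin : ∀ d, Φ d ≠ ⊤ := by
    intro d
    refine ne_top_of_le_ne_top hLtot (lintegral_mono fun x => ?_)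
    exact Set.indicator_le_self _ _ x
  -- Master inequality (H1), a.e. in t
  have hmaster : ∀ᵐ t ∂(volume : Measure ℝ), t ∈ Set.Ioo (0:ℝ) T →
      ENNReal.ofReal (∫ s in (0:ℝ)..t, (inner ℝ (v s) (u s) : ℝ))
        ≤ ENNReal.ofReal (Λβ + Λg) * D t := by
    have hineq' := (ae_restrict_iff' measurableSet_Ioo).1 hineq
    filter_upwards [hineq'] with t hineqt htT
    have claim : ∀ (z : ℝ → H) (Λz : ℝ), 0 ≤ Λz →
        (∀ᵐ x ∂(volume : Measure ℝ), x ∈ Set.Ioo (0:ℝ) T → ‖z x‖ ≤ Λz * ‖u x‖) →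
        (‖∫ s in (0:ℝ)..t, (inner ℝ (∫ r in (0:ℝ)..s, ℓ (s - r) • z r) (u s) : ℝ)‖₊ : ℝ≥0∞)
          ≤ ENNReal.ofReal Λz * D t := by
      intro z Λz hΛz hzb
      rw [intervalIntegral.integral_of_le htT.1.le]
      refine le_trans (enorm_integral_le_lintegral_enorm _) ?_
      rw [Measure.restrict_congr_set (Ioo_ae_eq_Ioc (μ := (volume : Measure ℝ))
        (a := 0) (b := t)).symm]
      have hb : ∀ᵐ s ∂(volume.restrict (Set.Ioo (0:ℝ) t)),
          (‖(inner ℝ (∫ r in (0:ℝ)..s, ℓ (s - r) • z r) (u s) : ℝ)‖₊ : ℝ≥0∞)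
            ≤ ENNReal.ofReal Λz * (J s * F s) := by
        filter_upwards [ae_restrict_mem measurableSet_Ioo, ae_restrict_of_ae hF'] with s hs hFs
        have hsT : s ∈ Set.Ioc (0:ℝ) T := ⟨hs.1, le_trans hs.2.le htT.2.le⟩
        have hsT' : s ∈ Set.Ioo (0:ℝ) T := ⟨hs.1, lt_of_lt_of_le hs.2 htT.2.le⟩
        have h1 : (‖(inner ℝ (∫ r in (0:ℝ)..s, ℓ (s - r) • z r) (u s) : ℝ)‖₊ : ℝ≥0∞)
            ≤ (‖∫ r in (0:ℝ)..s, ℓ (s - r) • z r‖₊ : ℝ≥0∞) * (‖u s‖₊ : ℝ≥0∞) := by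
          exact_mod_cast nnnorm_inner_le_nnnorm (𝕜 := ℝ) _ _
        refine le_trans h1 ?_
        rw [hFs hsT']
        calc (‖∫ r in (0:ℝ)..s, ℓ (s - r) • z r‖₊ : ℝ≥0∞) * F s
            ≤ (ENNReal.ofReal Λz * J s) * F s := by
              refine mul_le_mul_left ?_ _
              exact stmt10_conv_bound T ℓ z u Λz hΛz L F hL' hF' hzb s hsT
          _ = ENNReal.ofReal Λz * (J s * F s) := by rw [mul_assoc]
      refine le_trans (lintegral_mono_ae hb) (le_of_eq ?_)
      rw [lintegral_const_mul' _ _ ENNReal.ofReal_ne_top]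
    have hofr : ∀ x : ℝ, ENNReal.ofReal (-x) ≤ (‖x‖₊ : ℝ≥0∞) := by
      intro x
      rw [← ofReal_norm_eq_coe_nnnorm, Real.norm_eq_abs]
      exact ENNReal.ofReal_le_ofReal (neg_le_abs x)
    have hofr2 : ∀ x : ℝ, ENNReal.ofReal x ≤ (‖x‖₊ : ℝ≥0∞) := by
      intro x
      rw [← ofReal_norm_eq_coe_nnnorm, Real.norm_eq_abs]
      exact ENNReal.ofReal_le_ofReal (le_abs_self x)
    calc ENNReal.ofReal (∫ s in (0:ℝ)..t, (inner ℝ (v s) (u s) : ℝ))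
        ≤ ENNReal.ofReal
            (-(∫ s in (0:ℝ)..t, (inner ℝ (∫ r in (0:ℝ)..s, ℓ (s - r) • w r) (u s) : ℝ))
            + ∫ s in (0:ℝ)..t, (inner ℝ (∫ r in (0:ℝ)..s, ℓ (s - r) • G r) (u s) : ℝ)) :=
          ENNReal.ofReal_le_ofReal (hineqt htT)
      _ ≤ ENNReal.ofReal
            (-(∫ s in (0:ℝ)..t, (inner ℝ (∫ r in (0:ℝ)..s, ℓ (s - r) • w r) (u s) : ℝ)))
          + ENNReal.ofReal
            (∫ s in (0:ℝ)..t, (inner ℝ (∫ r in (0:ℝ)..s, ℓ (s - r) • G r) (u s) : ℝ)) :=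
          ENNReal.ofReal_add_le
      _ ≤ ENNReal.ofReal Λβ * D t + ENNReal.ofReal Λg * D t := by
          refine add_le_add (le_trans (hofr _) ?_) (le_trans (hofr2 _) ?_)
          · exact claim w Λβ hΛβ hwb'
          · exact claim G Λg hΛg hGb'
      _ = ENNReal.ofReal (Λβ + Λg) * D t := by rw [ENNReal.ofReal_add hΛβ hΛg, add_mul]
  -- H2 : lower bound by the energy
  have hH2 : ∀ t ∈ Set.Ioc (0:ℝ) T, ∀ a : ℝ, 0 ≤ a →
      ENNReal.ofReal Cα * (∫⁻ x in Set.Ioo a t, F x ^ 2 ∂(volume : Measure ℝ))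
        ≤ ENNReal.ofReal (∫ s in (0:ℝ)..t, (inner ℝ (v s) (u s) : ℝ)) := by
    intro t ht a ha
    have hsub : Set.Ioo a t ⊆ Set.Ioo 0 T :=
      fun x hx => ⟨lt_of_le_of_lt ha hx.1, lt_of_lt_of_le hx.2 ht.2⟩
    have hsub2 : Set.Ioo (0:ℝ) t ⊆ Set.Ioo 0 T := fun x hx => ⟨hx.1, lt_of_lt_of_le hx.2 ht.2⟩
    have hrr : ∀ (S : Set ℝ), S ⊆ Set.Ioo (0:ℝ) T → MeasurableSet S →
        (volume.restrict (Set.Ioo (0:ℝ) T)).restrict S = volume.restrict S := by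
      intro S hS hSm
      rw [Measure.restrict_restrict hSm, Set.inter_eq_left.2 hS]
    have hiu : IntegrableOn (fun x => ‖u x‖ ^ 2) (Set.Ioo a t) volume := by
      have := hu2.restrict (s := Set.Ioo a t)
      rwa [hrr _ hsub measurableSet_Ioo] at this
    have hivu : IntegrableOn (fun x => (inner ℝ (v x) (u x) : ℝ)) (Set.Ioo (0:ℝ) t) volume := by
      have := hvu.restrict (s := Set.Ioo (0:ℝ) t)
      rwa [hrr _ hsub2 measurableSet_Ioo] at this
    have hivu2 : IntegrableOn (fun x => (inner ℝ (v x) (u x) : ℝ)) (Set.Ioo a t) volume :=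
      hivu.mono_set fun x hx => ⟨lt_of_le_of_lt ha hx.1, hx.2⟩
    have hY : (∫⁻ x in Set.Ioo a t, F x ^ 2 ∂(volume : Measure ℝ))
        = ENNReal.ofReal (∫ x in Set.Ioo a t, ‖u x‖ ^ 2 ∂volume) := by
      rw [ofReal_integral_eq_lintegral_ofReal hiu
        (Filter.Eventually.of_forall fun x => sq_nonneg _)]
      refine lintegral_congr_ae ?_
      have hfs : ∀ᵐ x ∂(volume.restrict (Set.Ioo a t)), x ∈ Set.Ioo a t → F x = ENNReal.ofReal ‖u x‖ := by
        refine ae_restrict_of_ae ?_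
        filter_upwards [hfae'] with x hx hmem
        rw [hFdef, Set.indicator_of_mem (hsub hmem), hx (hsub hmem)]
      filter_upwards [ae_restrict_mem measurableSet_Ioo, hfs] with x hx hfx
      rw [hfx hx, ← ENNReal.ofReal_pow (norm_nonneg _)]
    rw [hY, ← ENNReal.ofReal_mul hCα.le]
    refine ENNReal.ofReal_le_ofReal ?_
    have hvu_nn : 0 ≤ᵐ[volume.restrict (Set.Ioo (0:ℝ) t)] fun s => (inner ℝ (v s) (u s) : ℝ) := by
      refine (ae_restrict_iff' measurableSet_Ioo).2 ?_
      filter_upwards [hmono'] with x hx hmem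
      exact le_trans (by positivity) (hx (hsub2 hmem))
    have hmono2 : ∀ᵐ x ∂(volume.restrict (Set.Ioo a t)),
        Cα * ‖u x‖ ^ 2 ≤ (inner ℝ (v x) (u x) : ℝ) := by
      refine (ae_restrict_iff' measurableSet_Ioo).2 ?_
      filter_upwards [hmono'] with x hx hmem
      exact hx (hsub hmem)
    rw [intervalIntegral.integral_of_le ht.1.le]
    calc Cα * ∫ x in Set.Ioo a t, ‖u x‖ ^ 2 ∂volume
        = ∫ x in Set.Ioo a t, Cα * ‖u x‖ ^ 2 ∂volume := (integral_const_mul _ _).symm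
      _ ≤ ∫ x in Set.Ioo a t, (inner ℝ (v x) (u x) : ℝ) ∂volume :=
          integral_mono_ae (hiu.const_mul Cα) hivu2 hmono2
      _ ≤ ∫ x in Set.Ioo (0:ℝ) t, (inner ℝ (v x) (u x) : ℝ) ∂volume := by
          refine setIntegral_mono_set hivu hvu_nn ?_
          exact HasSubset.Subset.eventuallyLE fun x hx => ⟨lt_of_le_of_lt ha hx.1, hx.2⟩
      _ = ∫ x in Set.Ioc (0:ℝ) t, (inner ℝ (v x) (u x) : ℝ) ∂volume :=
          (integral_Ioc_eq_integral_Ioo).symm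
  have hsing : ∀ c : ℝ, ∀ᵐ x ∂(volume : Measure ℝ), x ≠ c := by
    intro c
    refine ae_iff.2 ?_
    have h : {x : ℝ | ¬x ≠ c} = {c} := by ext x; simp
    rw [h]
    exact measure_singleton c
  -- D bound via kernel lemma
  have hDbound : ∀ a t δ : ℝ, 0 ≤ a → t ≤ a + δ →
      (∀ᵐ x ∂(volume : Measure ℝ), x ∈ Set.Ioo 0 a → F x = 0) →
      D t ≤ Φ δ * ∫⁻ x in Set.Ioo a t, F x ^ 2 ∂(volume : Measure ℝ) := by
    intro a t δ ha htδ hF0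
    have hkill : ∀ᵐ r ∂(volume : Measure ℝ), ∀ g : ℝ≥0∞,
        0 < r → g * F r = (Set.Ioi a).indicator (fun x => g * F x) r := by
      filter_upwards [hF0, hsing a] with r h0 hne g hr
      by_cases hra : a < r
      · rw [Set.indicator_of_mem (Set.mem_Ioi.mpr hra)]
      · push_neg at hra
        have hra' : r < a := lt_of_le_of_ne hra hne
        rw [Set.indicator_of_notMem (by simp only [Set.mem_Ioi, not_lt]; exact hra),
          h0 ⟨hr, hra'⟩, mul_zero]
    have hIoiinter : ∀ c : ℝ, Set.Ioi a ∩ Set.Ioo (0:ℝ) c = Set.Ioo a c := by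
      intro c
      ext x
      constructor
      · rintro ⟨h1, h2⟩; exact ⟨h1, h2.2⟩
      · rintro ⟨h1, h2⟩; exact ⟨h1, lt_of_le_of_lt ha h1, h2⟩
    have hJres : ∀ s : ℝ, J s = ∫⁻ r in Set.Ioo a s, L (s - r) * F r ∂volume := by
      intro s
      show (∫⁻ r in Set.Ioo (0:ℝ) s, L (s - r) * F r ∂volume)
          = ∫⁻ r in Set.Ioo a s, L (s - r) * F r ∂volume
      have h1 : (∫⁻ r in Set.Ioo (0:ℝ) s, L (s - r) * F r ∂volume)
          = ∫⁻ r in Set.Ioo (0:ℝ) s,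
              (Set.Ioi a).indicator (fun x => L (s - x) * F x) r ∂volume := by
        refine lintegral_congr_ae ?_
        filter_upwards [ae_restrict_of_ae hkill, ae_restrict_mem measurableSet_Ioo] with r hk hr
        exact hk _ hr.1
      rw [h1, lintegral_indicator measurableSet_Ioi, Measure.restrict_restrict measurableSet_Ioi,
        hIoiinter s]
    have hres : D t = ∫⁻ s in Set.Ioo a t,
        (∫⁻ r in Set.Ioo a s, L (s - r) * F r ∂volume) * F s ∂volume := by
      show (∫⁻ s in Set.Ioo (0:ℝ) t, J s * F s ∂volume) = _
      have h2 : (∫⁻ s in Set.Ioo (0:ℝ) t, J s * F s ∂volume)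
          = ∫⁻ s in Set.Ioo (0:ℝ) t, (Set.Ioi a).indicator (fun x => J x * F x) s ∂volume := by
        refine lintegral_congr_ae ?_
        filter_upwards [ae_restrict_of_ae hF0, ae_restrict_of_ae (hsing a),
          ae_restrict_mem measurableSet_Ioo] with s h0 hne hs
        by_cases hsa : a < s
        · rw [Set.indicator_of_mem (Set.mem_Ioi.mpr hsa)]
        · push_neg at hsa
          have hsa' : s < a := lt_of_le_of_ne hsa hne
          rw [Set.indicator_of_notMem (by simp only [Set.mem_Ioi, not_lt]; exact hsa),
            h0 ⟨hs.1, hsa'⟩, mul_zero]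
      rw [h2, lintegral_indicator measurableSet_Ioi, Measure.restrict_restrict measurableSet_Ioi,
        hIoiinter t]
      refine lintegral_congr fun s => ?_
      rw [hJres s]
    rw [hres]
    exact stmt10_kernel L F hLmeas hFmeas hFtop a t δ htδ (hΦfin δ)
  -- choice of δ
  obtain ⟨δ, hδpos, hδsmall⟩ : ∃ δ : ℝ, 0 < δ ∧
      ENNReal.ofReal (Λβ + Λg) * Φ δ < ENNReal.ofReal Cα := by
    have hΦν : ∀ d : ℝ, Φ d = ∫⁻ x in Set.Ioo (0:ℝ) d, L x ∂volume := by
      intro d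
      show (∫⁻ x, (Set.Ioo (0:ℝ) d).indicator L x ∂(volume : Measure ℝ)) = _
      exact lintegral_indicator measurableSet_Ioo _
    set ν : Measure ℝ := volume.withDensity L with hνdef
    have hνIoo : ∀ d : ℝ, Φ d = ν (Set.Ioo 0 d) := by
      intro d
      rw [hΦν d, hνdef, withDensity_apply _ measurableSet_Ioo]
    have hanti : Antitone (fun n : ℕ => Set.Ioo (0:ℝ) (1/(n+1))) := by
      intro m n hmn
      refine Set.Ioo_subset_Ioo_right ?_
      apply one_div_le_one_div_of_le
      · positivity
      · exact_mod_cast by exact_mod_cast add_le_add_left (Nat.cast_le.2 hmn) 1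
    have hinter : (⋂ n : ℕ, Set.Ioo (0:ℝ) (1/(n+1))) = ∅ := by
      ext x
      simp only [Set.mem_iInter, Set.mem_Ioo, Set.mem_empty_iff_false, iff_false, not_forall,
        not_and, not_lt]
      by_cases hx : 0 < x
      · obtain ⟨n, hn⟩ := exists_nat_one_div_lt hx
        exact ⟨n, fun _ => by exact_mod_cast hn.le⟩
      · exact ⟨0, fun h => absurd h hx⟩
    have hfin : ν (Set.Ioo (0:ℝ) (1/((0:ℕ)+1))) ≠ ⊤ := by
      refine ne_top_of_le_ne_top ?_ (measure_mono (Set.subset_univ _))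
      rw [hνdef]
      rw [withDensity_apply _ MeasurableSet.univ]
      simpa [Measure.restrict_univ] using hLtot
    have htend := tendsto_measure_iInter_atTop
      (fun n : ℕ => (measurableSet_Ioo (a := (0:ℝ)) (b := 1/(n+1))).nullMeasurableSet)
      hanti ⟨0, hfin⟩
    rw [hinter] at htend
    simp only [measure_empty] at htend
    set ε := ENNReal.ofReal Cα / (ENNReal.ofReal (Λβ + Λg) + 1) with hεdef
    have hε : 0 < ε := by
      rw [hεdef]
      refine ENNReal.div_pos ?_ ?_
      · simpa using (ENNReal.ofReal_pos.2 hCα).ne'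
      · exact ENNReal.add_ne_top.2 ⟨ENNReal.ofReal_ne_top, ENNReal.one_ne_top⟩
    obtain ⟨n, hn⟩ := (htend.eventually_lt_const hε).exists
    refine ⟨1/(n+1), by positivity, ?_⟩
    have hΦn : Φ (1/((n:ℝ)+1)) < ε := by
      rw [hνIoo]
      exact_mod_cast hn
    calc ENNReal.ofReal (Λβ + Λg) * Φ (1/((n:ℝ)+1))
        ≤ (ENNReal.ofReal (Λβ + Λg) + 1) * Φ (1/((n:ℝ)+1)) :=
          mul_le_mul_left (le_add_of_nonneg_right (zero_le)) _
      _ = Φ (1/((n:ℝ)+1)) * (ENNReal.ofReal (Λβ + Λg) + 1) := mul_comm _ _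
      _ < ENNReal.ofReal Cα := ENNReal.mul_lt_of_lt_div (by rw [← hεdef]; exact hΦn)
  -- one bootstrap step
  have hstep : ∀ a b : ℝ, 0 ≤ a → a < b → b ≤ T → b ≤ a + δ →
      (∀ᵐ x ∂(volume : Measure ℝ), x ∈ Set.Ioo 0 a → F x = 0) →
      (∀ᵐ x ∂(volume : Measure ℝ), x ∈ Set.Ioo 0 b → F x = 0) := by
    intro a b ha hab hbT hbδ hF0
    have hA : ∀ᵐ t ∂(volume : Measure ℝ), t ∈ Set.Ioo a b →
        (∫⁻ x in Set.Ioo a t, F x ^ 2 ∂(volume : Measure ℝ)) = 0 := by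
      filter_upwards [hmaster] with t hmt htab
      have htT : t ∈ Set.Ioo (0:ℝ) T := ⟨lt_of_le_of_lt ha htab.1, lt_of_lt_of_le htab.2 hbT⟩
      set Y := ∫⁻ x in Set.Ioo a t, F x ^ 2 ∂(volume : Measure ℝ) with hYdef
      have hchain : ENNReal.ofReal Cα * Y ≤ (ENNReal.ofReal (Λβ + Λg) * Φ δ) * Y := by
        calc ENNReal.ofReal Cα * Y
            ≤ ENNReal.ofReal (∫ s in (0:ℝ)..t, (inner ℝ (v s) (u s) : ℝ)) :=
              hH2 t ⟨htT.1, htT.2.le⟩ a ha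
          _ ≤ ENNReal.ofReal (Λβ + Λg) * D t := hmt htT
          _ ≤ ENNReal.ofReal (Λβ + Λg) * (Φ δ * Y) :=
              mul_le_mul_right (hDbound a t δ ha (by linarith [htab.2]) hF0) _
          _ = (ENNReal.ofReal (Λβ + Λg) * Φ δ) * Y := by rw [mul_assoc]
      by_contra hY0
      have hYtop : Y ≠ ⊤ := ne_top_of_le_ne_top hF2vol (setLIntegral_le_lintegral _ _)
      have hle := (ENNReal.mul_le_mul_iff_left hY0 hYtop).mp hchain
      exact lt_irrefl _ (lt_of_le_of_lt hle hδsmall)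
    have hA' : ∀ᵐ t ∂(volume : Measure ℝ), t ∈ Set.Ioo a b →
        (∀ᵐ x ∂(volume : Measure ℝ), x ∈ Set.Ioo a t → F x = 0) := by
      filter_upwards [hA] with t ht htab
      have h0 := ht htab
      have h1 := (lintegral_eq_zero_iff (hFmeas.pow_const 2)).1 h0
      have h2 := (ae_restrict_iff' measurableSet_Ioo).1 h1
      filter_upwards [h2] with x hx hxt
      have h3 := hx hxt
      exact (pow_eq_zero_iff (by norm_num : (2:ℕ) ≠ 0)).1 h3
    -- good points approaching b
    have hB : ∀ k : ℕ, ∃ tk : ℝ, (b - (b - a)/((k:ℝ)+1) < tk ∧ tk < b) ∧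
        (∀ᵐ x ∂(volume : Measure ℝ), x ∈ Set.Ioo a tk → F x = 0) := by
      intro k
      set c := b - (b - a)/((k:ℝ)+1) with hc
      have hk1 : (0:ℝ) < (k:ℝ)+1 := by positivity
      have hca : a ≤ c := by
        rw [hc]
        have h1 : (b - a)/((k:ℝ)+1) ≤ b - a := by
          apply div_le_self (by linarith) (by linarith)
        linarith
      have hcb : c < b := by
        rw [hc]
        have h1 : 0 < (b - a)/((k:ℝ)+1) := div_pos (by linarith) hk1
        linarith
      by_contra hno
      have hno' : ∀ tk : ℝ, ¬ ((c < tk ∧ tk < b) ∧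
          (∀ᵐ x ∂(volume : Measure ℝ), x ∈ Set.Ioo a tk → F x = 0)) := not_exists.mp hno
      rw [ae_iff] at hA'
      have hsub3 : Set.Ioo c b ⊆ {t | ¬(t ∈ Set.Ioo a b →
          (∀ᵐ x ∂(volume : Measure ℝ), x ∈ Set.Ioo a t → F x = 0))} := by
        intro t ht
        exact fun himp => hno' t ⟨⟨ht.1, ht.2⟩, himp ⟨lt_of_le_of_lt hca ht.1, ht.2⟩⟩
      have hnull := measure_mono_null hsub3 hA'
      rw [Real.volume_Ioo] at hnull
      rw [ENNReal.ofReal_eq_zero] at hnull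
      linarith
    choose tk htk1 htk2 using hB
    have hall : ∀ᵐ x ∂(volume : Measure ℝ), ∀ k : ℕ, x ∈ Set.Ioo a (tk k) → F x = 0 :=
      ae_all_iff.2 htk2
    filter_upwards [hF0, hall, hsing a] with x hx0 hxall hxne hxmem
    rcases lt_trichotomy x a with hlt | heq | hgt
    · exact hx0 ⟨hxmem.1, hlt⟩
    · exact absurd heq hxne
    · obtain ⟨k, hk⟩ : ∃ k : ℕ, (b - a)/((k:ℝ)+1) < b - x := by
        have hbx : 0 < (b - x)/(b - a) := div_pos (by linarith [hxmem.2]) (by linarith)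
        obtain ⟨n, hn⟩ := exists_nat_one_div_lt hbx
        refine ⟨n, ?_⟩
        have h2 : (b - a) * (1/((n:ℝ)+1)) < (b - a) * ((b - x)/(b - a)) :=
          mul_lt_mul_of_pos_left hn (by linarith)
        have h3 : (b - a) * ((b - x)/(b - a)) = b - x := by
          rw [mul_comm]
          exact div_mul_cancel₀ _ (by linarith : b - a ≠ 0)
        rw [mul_one_div, h3] at h2
        exact h2
      refine hxall k ⟨hgt, ?_⟩
      have h4 := (htk1 k).1
      linarith
  -- induction on intervals of length δ
  have hind : ∀ n : ℕ, ∀ᵐ x ∂(volume : Measure ℝ),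
      x ∈ Set.Ioo 0 (min ((n:ℝ) * δ) T) → F x = 0 := by
    intro n
    induction n with
    | zero =>
      have h0 : min (((0:ℕ):ℝ) * δ) T = 0 := by
        push_cast
        rw [zero_mul]
        exact min_eq_left hT.le
      rw [h0]
      simp
    | succ n ih =>
      have hcast : (((n+1:ℕ)):ℝ) = (n:ℝ) + 1 := by push_cast; ring
      rw [hcast]
      by_cases hTn : T ≤ (n:ℝ) * δ
      · rw [min_eq_right (by nlinarith : T ≤ ((n:ℝ)+1) * δ)]
        rw [min_eq_right hTn] at ih
        exact ih
      · push_neg at hTn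
        have ha0 : (0:ℝ) ≤ (n:ℝ) * δ := by positivity
        rw [min_eq_left hTn.le] at ih
        refine hstep ((n:ℝ) * δ) (min (((n:ℝ)+1) * δ) T) ha0 ?_ (min_le_right _ _) ?_ ih
        · exact lt_min (by nlinarith) hTn
        · calc min (((n:ℝ)+1) * δ) T ≤ ((n:ℝ)+1) * δ := min_le_left _ _
            _ = (n:ℝ) * δ + δ := by ring
  obtain ⟨n, hn⟩ := exists_nat_ge (T / δ)
  have hTn : T ≤ (n:ℝ) * δ := by
    rw [div_le_iff₀ hδpos] at hn
    linarith
  have hfinal := hind n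
  rw [min_eq_right hTn] at hfinal
  refine (ae_restrict_iff' measurableSet_Ioo).2 ?_
  filter_upwards [hfinal, hfae'] with x hx1 hx2 hxmem
  have hFx := hx1 hxmem
  rw [hFdef, Set.indicator_of_mem hxmem] at hFx
  have hle0 : ‖u x‖ ≤ 0 := by
    rw [hx2 hxmem]
    exact ENNReal.ofReal_eq_zero.1 hFx
  simpa using norm_le_zero_iff.1 hle0
end
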